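/- arXiv:2009.05594 — 7 statements merged into one kernel-verified Lean document; each statement's English description precedes it below -/
import Mathlib

section
/- Let f : ℝ → ℝ be bounded and regulated, and satisfy the no-jamming condition. Then for every x₀ ∈ ℝ there exists a Carathéodory solution x : [0,∞) → ℝ of the Cauchy problem ẋ = f(x), x(0) = x₀, defined for all times t ≥ 0; that is, there exists x with x(t) = x₀ + ∫₀ᵗ f(x(s)) ds for all t ≥ 0. -/
open MeasureTheory Set Filter

/-- `f` is regulated with left limits `fl` and right limits `fr`. -/
def Regulated (f fl fr : ℝ → ℝ) : Prop :=
  ∀ y : ℝ,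
    Filter.Tendsto f (nhdsWithin y (Set.Iio y)) (nhds (fl y)) ∧
    Filter.Tendsto f (nhdsWithin y (Set.Ioi y)) (nhds (fr y))

/-- The no-jamming condition: if `f(y−)·f(y+) = 0` or `f(y−) > 0 > f(y+)`, then `f(y) = 0`. -/
def NoJamming (f fl fr : ℝ → ℝ) : Prop :=
  ∀ y : ℝ, (fl y * fr y = 0 ∨ (0 < fl y ∧ fr y < 0)) → f y = 0

open scoped Topology

/-! Where `f(x₀+) > 0` the solution moves right and is the inverse of the travel time
`τ(y) = ∫_{x₀}^y dz / f(z)`, which is finite, continuous and strictly increasing as long as `f`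
stays above a positive constant almost everywhere, that is on an interval `[x₀, b)`. If `b` is
finite, no-jamming forces `f(b) = 0`, and the solution rests at `b` once it gets there. A
regulated `f` is continuous off a countable set, and off the corresponding countable set of times
the inverse function theorem gives `ẋ = f(x)`, whence the integral equation. The case
`f(x₀−) < 0` is the mirror image, and in the remaining case no-jamming gives `f(x₀) = 0`. -/

theorem countable_of_forall_eventually_notMem {X : Type*} [TopologicalSpace X]
    [HereditarilyLindelofSpace X] {s : Set X} (h : ∀ x ∈ s, ∀ᶠ y in 𝓝[≠] x, y ∉ s) :
    s.Countable :=
  (HereditarilyLindelofSpace.isLindelof s).countable <|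
    discreteTopology_subtype_iff.2 fun x hx => inf_principal_eq_bot.2 (h x hx)

theorem countable_not_continuousAt_of_tendsto_nhdsLT_nhdsGT {E : Type*} [PseudoMetricSpace E]
    {f fl fr : ℝ → E}
    (hf : ∀ y, Tendsto f (𝓝[<] y) (𝓝 (fl y)) ∧ Tendsto f (𝓝[>] y) (𝓝 (fr y))) :
    {y | ¬ContinuousAt f y}.Countable := by
  set B : ℝ → Set ℝ := fun ε => {y | ∃ᶠ z in 𝓝 y, ε ≤ dist (f z) (f y)}
  have hcover : {y | ¬ContinuousAt f y} ⊆ ⋃ n : ℕ, B (1 / (n + 1)) := by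
    intro y hy
    simp only [mem_ofPred_eq, ContinuousAt, Metric.tendsto_nhds, not_forall, not_eventually,
      not_lt] at hy
    obtain ⟨ε, hε, hfreq⟩ := hy
    obtain ⟨n, hn⟩ := exists_nat_one_div_lt hε
    exact mem_iUnion.2 ⟨n, hfreq.mono fun z hz => hn.le.trans hz⟩
  -- On each side of `w`, `f` stays `ε / 2`-close to its one-sided limit, so no point of `B ε`
  -- lies there.
  have hside : ∀ ε > 0, ∀ (s : Set ℝ) (w : ℝ) (l : E), IsOpen s → Tendsto f (𝓝[s] w) (𝓝 l) →
      ∀ᶠ v in 𝓝[s] w, v ∉ B ε := by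
    intro ε hε s w l hs hlim
    have hclose : ∀ᶠ z in 𝓝[s] w, dist (f z) l < ε / 2 :=
      hlim (Metric.ball_mem_nhds l (half_pos hε))
    filter_upwards [eventually_eventually_nhdsWithin.2 hclose, self_mem_nhdsWithin]
      with v hv hvs
    rw [hs.nhdsWithin_eq hvs] at hv
    simp only [B, mem_ofPred_eq, not_frequently, not_le]
    filter_upwards [hv] with z hz
    linarith [dist_triangle_right (f z) (f v) l, hv.self_of_nhds]
  refine (countable_iUnion fun n => countable_of_forall_eventually_notMem fun w _ => ?_).mono
    hcover
  rw [← nhdsLT_sup_nhdsGT, eventually_sup]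
  exact ⟨hside _ Nat.one_div_pos_of_nat _ w _ isOpen_Iio (hf w).1,
    hside _ Nat.one_div_pos_of_nat _ w _ isOpen_Ioi (hf w).2⟩

theorem aestronglyMeasurable_of_countable_not_continuousAt {E : Type*} [TopologicalSpace E]
    [TopologicalSpace.PseudoMetrizableSpace E] {f : ℝ → E} (μ : Measure ℝ) [NullSingletonClass μ]
    (hf : {y | ¬ContinuousAt f y}.Countable) : AEStronglyMeasurable f μ := by
  have hcont : ContinuousOn f {y | ¬ContinuousAt f y}ᶜ := fun y hy =>
    (not_not.1 hy).continuousWithinAt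
  rw [← Measure.restrict_eq_self_of_ae_mem (hf.ae_notMem μ)]
  exact hcont.aestronglyMeasurable hf.measurableSet.compl

theorem exists_mem_of_ae_imp {X : Type*} [MeasurableSpace X] {μ : Measure X} {s : Set X}
    {p : X → Prop} (hs : μ s ≠ 0) (h : ∀ᵐ x ∂μ, x ∈ s → p x) : ∃ x ∈ s, p x := by
  by_contra! H
  exact hs (measure_eq_zero_iff_ae_notMem.2 (h.mono fun x hx hxs => H x hxs (hx hxs)))

theorem le_of_continuousAt_of_ae_imp {X : Type*} [TopologicalSpace X] [MeasurableSpace X]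
    {μ : Measure X} [μ.IsOpenPosMeasure] {f : X → ℝ} {s : Set X} {x : X} {c : ℝ}
    (hs : s ∈ 𝓝 x) (hf : ContinuousAt f x) (h : ∀ᵐ z ∂μ, z ∈ s → c ≤ f z) : c ≤ f x := by
  by_contra! hlt
  obtain ⟨U, hUsub, hU, hxU⟩ := mem_nhds_iff.1 (inter_mem hs (hf.eventually (gt_mem_nhds hlt)))
  obtain ⟨z, hzU, hz⟩ := exists_mem_of_ae_imp (hU.measure_ne_zero μ ⟨x, hxU⟩)
    (h.mono fun z hz hzU => hz (hUsub hzU).1)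
  exact (hUsub hzU).2.not_ge hz

theorem IntervalIntegrable.of_hasDerivAt_off_countable {g g' : ℝ → ℝ} {a b C : ℝ}
    {s : Set ℝ} (hab : a ≤ b) (hs : s.Countable) (hd : ∀ x ∈ Ioo a b \ s, HasDerivAt g (g' x) x)
    (hg' : ∀ x, |g' x| ≤ C) : IntervalIntegrable g' volume a b := by
  have hae : g' =ᵐ[volume.restrict (Ioc a b)] deriv g := by
    filter_upwards [ae_restrict_mem measurableSet_Ioc,
      ae_restrict_of_ae ((hs.union (countable_singleton b)).ae_notMem volume)] with x hx hxs
    have hxb : x ≠ b := fun h => hxs (Or.inr h)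
    exact (hd x ⟨⟨hx.1, lt_of_le_of_ne hx.2 hxb⟩, fun h => hxs (Or.inl h)⟩).deriv.symm
  rw [intervalIntegrable_iff_integrableOn_Ioc_of_le hab]
  exact (integrable_const C).mono' ((measurable_deriv g).aestronglyMeasurable.congr hae.symm)
    (ae_of_all _ hg')

theorem NoJamming.eq_zero {f fl fr : ℝ → ℝ} (hnj : NoJamming f fl fr) {y : ℝ} (hl : 0 ≤ fl y)
    (hlr : ¬(0 < fl y ∧ 0 < fr y)) : f y = 0 := by
  apply hnj
  rcases hl.eq_or_lt with h | h
  · left; rw [← h, zero_mul]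
  · rcases lt_trichotomy (fr y) 0 with h' | h' | h'
    · exact Or.inr ⟨h, h'⟩
    · left; rw [h', mul_zero]
    · exact absurd ⟨h, h'⟩ hlr

theorem Regulated.aestronglyMeasurable_inv {f fl fr : ℝ → ℝ} (hreg : Regulated f fl fr) :
    AEStronglyMeasurable (fun z => (f z)⁻¹) volume :=
  (aestronglyMeasurable_of_countable_not_continuousAt volume
    (countable_not_continuousAt_of_tendsto_nhdsLT_nhdsGT hreg)).aemeasurable.inv
    |>.aestronglyMeasurable

def IsCaratheodorySolution (f : ℝ → ℝ) (x₀ : ℝ) (x : ℝ → ℝ) : Prop :=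
  ∀ t, 0 ≤ t → x t = x₀ + ∫ s in (0 : ℝ)..t, f (x s)

section Forward

variable {f fl fr : ℝ → ℝ} {M x₀ : ℝ}

/-- The interval `[x₀, b)` that the solution sweeps before it can come to rest. -/
def forwardRegion (f : ℝ → ℝ) (x₀ : ℝ) : Set ℝ :=
  {y | x₀ ≤ y ∧ ∃ y' > y, ∃ c > 0, ∀ᵐ z, z ∈ Ioo x₀ y' → c ≤ f z}

noncomputable def travelTime (f : ℝ → ℝ) (x₀ y : ℝ) : ℝ :=
  ∫ z in x₀..y, (f z)⁻¹

/-- The inverse of `travelTime f x₀` on `forwardRegion f x₀`, constant once it reaches the end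
of that interval. -/
noncomputable def forwardSolution (f : ℝ → ℝ) (x₀ t : ℝ) : ℝ :=
  sSup {y ∈ forwardRegion f x₀ | travelTime f x₀ y ≤ t}

theorem mem_forwardRegion_of_le {y z : ℝ} (hy : y ∈ forwardRegion f x₀) (hz : x₀ ≤ z)
    (hzy : z ≤ y) : z ∈ forwardRegion f x₀ :=
  let ⟨_, y', hy', hc⟩ := hy
  ⟨hz, y', hzy.trans_lt hy', hc⟩

theorem exists_gt_mem_forwardRegion {y : ℝ} (hy : y ∈ forwardRegion f x₀) :
    ∃ y' ∈ forwardRegion f x₀, y < y' := by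
  obtain ⟨hxy, y', hy', hc⟩ := hy
  exact ⟨(y + y') / 2, ⟨by linarith, y', by linarith, hc⟩, by linarith⟩

theorem ae_le_of_mem_forwardRegion {y : ℝ} (hy : y ∈ forwardRegion f x₀) :
    ∃ c > 0, ∀ᵐ z, z ∈ Ioc x₀ y → c ≤ f z := by
  obtain ⟨-, y', hy', c, hc, h⟩ := hy
  exact ⟨c, hc, h.mono fun z hz hzI => hz ⟨hzI.1, hzI.2.trans_lt hy'⟩⟩

theorem pos_of_mem_forwardRegion_of_continuousAt {y : ℝ} (hy : y ∈ forwardRegion f x₀)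
    (hxy : x₀ < y) (hf : ContinuousAt f y) : 0 < f y := by
  obtain ⟨-, y', hy', c, hc, hae⟩ := hy
  exact hc.trans_le (le_of_continuousAt_of_ae_imp (Ioo_mem_nhds hxy hy') hf hae)

theorem self_mem_forwardRegion (hreg : Regulated f fl fr) (hpos : 0 < fr x₀) :
    x₀ ∈ forwardRegion f x₀ := by
  obtain ⟨y', hy', hsub⟩ := mem_nhdsGT_iff_exists_Ioo_subset.1
    ((hreg x₀).2.eventually (lt_mem_nhds (half_lt_self hpos)))
  exact ⟨le_rfl, y', hy', fr x₀ / 2, half_pos hpos, ae_of_all _ fun z hz => le_of_lt (hsub hz)⟩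

theorem notMem_forwardRegion_of_isLUB {b : ℝ} (hb : IsLUB (forwardRegion f x₀) b) :
    b ∉ forwardRegion f x₀ := fun hbJ =>
  let ⟨_, hy'J, hby'⟩ := exists_gt_mem_forwardRegion hbJ
  (hb.1 hy'J).not_gt hby'

theorem nonneg_left_lim_of_isLUB_forwardRegion (hreg : Regulated f fl fr) {b : ℝ}
    (hb : IsLUB (forwardRegion f x₀) b) : 0 ≤ fl b := by
  by_contra! hneg
  obtain ⟨a, hab, hsub⟩ := mem_nhdsLT_iff_exists_Ioo_subset.1
    ((hreg b).1.eventually (gt_mem_nhds hneg))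
  obtain ⟨y, hyJ, hay, hyb⟩ := hb.exists_between (mem_Iio.1 hab)
  have hyb' : y < b := lt_of_le_of_ne hyb fun h => notMem_forwardRegion_of_isLUB hb (h ▸ hyJ)
  obtain ⟨hxy, y', hyy', c, hc, hae⟩ := hyJ
  obtain ⟨z, hz, hcz⟩ := exists_mem_of_ae_imp (s := Ioo y (min y' b))
    (isOpen_Ioo.measure_ne_zero volume (nonempty_Ioo.2 (lt_min hyy' hyb')))
    (hae.mono fun z hz hzs => hz ⟨hxy.trans_lt hzs.1, hzs.2.trans_le (min_le_left _ _)⟩)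
  have := hsub ⟨hay.trans hz.1, hz.2.trans_le (min_le_right _ _)⟩
  simp only [mem_ofPred_eq] at this
  linarith

theorem not_pos_lims_of_isLUB_forwardRegion (hreg : Regulated f fl fr) {b : ℝ}
    (hb : IsLUB (forwardRegion f x₀) b) : ¬(0 < fl b ∧ 0 < fr b) := by
  rintro ⟨hl, hr⟩
  obtain ⟨a, hab, hsubl⟩ := mem_nhdsLT_iff_exists_Ioo_subset.1
    ((hreg b).1.eventually (lt_mem_nhds (half_lt_self hl)))
  obtain ⟨a', hba', hsubr⟩ := mem_nhdsGT_iff_exists_Ioo_subset.1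
    ((hreg b).2.eventually (lt_mem_nhds (half_lt_self hr)))
  obtain ⟨y, hyJ, hay, -⟩ := hb.exists_between (mem_Iio.1 hab)
  have hxb : x₀ ≤ b := hyJ.1.trans (hb.1 hyJ)
  obtain ⟨-, y', hyy', c, hc, hae⟩ := hyJ
  -- `f` is bounded below a.e. on `(x₀, y')` and, by the one-sided limits, on `(a, a') \ {b}`.
  refine notMem_forwardRegion_of_isLUB hb ⟨hxb, a', hba', min c (min (fl b / 2) (fr b / 2)),
    by positivity, ?_⟩
  filter_upwards [hae, (countable_singleton b).ae_notMem volume] with z hz hzb hzI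
  rcases lt_or_ge z y' with h | h
  · exact (min_le_left _ _).trans (hz ⟨hzI.1, h⟩)
  · rcases lt_or_gt_of_ne hzb with h' | h'
    · exact (min_le_right _ _).trans ((min_le_left _ _).trans
        (hsubl ⟨by linarith, h'⟩).le)
    · exact (min_le_right _ _).trans ((min_le_right _ _).trans
        (hsubr ⟨h', hzI.2⟩).le)

theorem apply_eq_zero_of_isLUB_forwardRegion (hreg : Regulated f fl fr)
    (hnj : NoJamming f fl fr) {b : ℝ} (hb : IsLUB (forwardRegion f x₀) b) : f b = 0 :=
  hnj.eq_zero (nonneg_left_lim_of_isLUB_forwardRegion hreg hb)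
    (not_pos_lims_of_isLUB_forwardRegion hreg hb)

theorem intervalIntegrable_inv_of_mem_forwardRegion (hreg : Regulated f fl fr) {y : ℝ}
    (hy : y ∈ forwardRegion f x₀) : IntervalIntegrable (fun z => (f z)⁻¹) volume x₀ y := by
  obtain ⟨c, hc, hae⟩ := ae_le_of_mem_forwardRegion hy
  rw [intervalIntegrable_iff_integrableOn_Ioc_of_le hy.1]
  refine Measure.integrableOn_of_bounded (M := c⁻¹) measure_Ioc_lt_top.ne
    hreg.aestronglyMeasurable_inv ?_
  rw [ae_restrict_iff' measurableSet_Ioc]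
  filter_upwards [hae] with z hz hzI
  rw [norm_inv, Real.norm_eq_abs, abs_of_pos (hc.trans_le (hz hzI))]
  exact inv_anti₀ hc (hz hzI)

theorem travelTime_self : travelTime f x₀ x₀ = 0 :=
  intervalIntegral.integral_same

theorem sub_le_mul_travelTime_sub (hbd : ∀ y, |f y| ≤ M) (hreg : Regulated f fl fr)
    {y₁ y₂ : ℝ} (hx : x₀ ≤ y₁) (h12 : y₁ ≤ y₂) (hy₂ : y₂ ∈ forwardRegion f x₀) :
    y₂ - y₁ ≤ M * (travelTime f x₀ y₂ - travelTime f x₀ y₁) := by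
  have hint := intervalIntegrable_inv_of_mem_forwardRegion hreg hy₂
  have hint₁ : IntervalIntegrable (fun z => (f z)⁻¹) volume x₀ y₁ :=
    hint.mono_set <| by
      rw [uIcc_of_le hx, uIcc_of_le (hx.trans h12)]; exact Icc_subset_Icc_right h12
  have hint₁₂ : IntervalIntegrable (fun z => (f z)⁻¹) volume y₁ y₂ :=
    hint.mono_set <| by
      rw [uIcc_of_le h12, uIcc_of_le (hx.trans h12)]; exact Icc_subset_Icc_left hx
  obtain ⟨c, hc, hae⟩ := ae_le_of_mem_forwardRegion hy₂
  rw [travelTime, travelTime, intervalIntegral.integral_interval_sub_left hint hint₁,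
    ← intervalIntegral.integral_const_mul]
  calc y₂ - y₁ = ∫ _ in y₁..y₂, (1 : ℝ) := by simp
    _ ≤ ∫ z in y₁..y₂, M * (f z)⁻¹ := by
      refine intervalIntegral.integral_mono_ae_restrict h12 intervalIntegrable_const
        (hint₁₂.const_mul M) ?_
      filter_upwards [ae_restrict_mem measurableSet_Icc, ae_restrict_of_ae hae,
        ae_restrict_of_ae ((countable_singleton y₁).ae_notMem volume)] with z hzI hz hzy
      have hfz : c ≤ f z := hz ⟨hx.trans_lt (lt_of_le_of_ne hzI.1 (Ne.symm hzy)), hzI.2⟩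
      rw [← div_eq_mul_inv, one_le_div (hc.trans_le hfz)]
      exact le_of_abs_le (hbd z)

theorem travelTime_lt_travelTime (hbd : ∀ y, |f y| ≤ M) (hreg : Regulated f fl fr)
    {y₁ y₂ : ℝ} (hx : x₀ ≤ y₁) (h12 : y₁ < y₂) (hy₂ : y₂ ∈ forwardRegion f x₀) :
    travelTime f x₀ y₁ < travelTime f x₀ y₂ := by
  have := sub_le_mul_travelTime_sub hbd hreg hx h12.le hy₂
  have hM : 0 ≤ M := (abs_nonneg _).trans (hbd 0)
  by_contra! h
  nlinarith

theorem continuousOn_travelTime (hreg : Regulated f fl fr) {y : ℝ}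
    (hy : y ∈ forwardRegion f x₀) : ContinuousOn (travelTime f x₀) (Icc x₀ y) := by
  have := intervalIntegral.continuousOn_primitive_interval'
    (intervalIntegrable_inv_of_mem_forwardRegion hreg hy) left_mem_uIcc
  rwa [uIcc_of_le hy.1] at this

theorem hasDerivAt_travelTime (hreg : Regulated f fl fr) {y : ℝ} (hy : y ∈ forwardRegion f x₀)
    (hxy : x₀ < y) (hf : ContinuousAt f y) : HasDerivAt (travelTime f x₀) (f y)⁻¹ y :=
  intervalIntegral.integral_hasDerivAt_right
    (intervalIntegrable_inv_of_mem_forwardRegion hreg hy)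
    hreg.aestronglyMeasurable_inv.stronglyMeasurableAtFilter
    (hf.inv₀ (pos_of_mem_forwardRegion_of_continuousAt hy hxy hf).ne')

theorem le_self_add_mul_of_travelTime_le (hbd : ∀ y, |f y| ≤ M) (hreg : Regulated f fl fr)
    {t y : ℝ} (hy : y ∈ forwardRegion f x₀) (ht : travelTime f x₀ y ≤ t) : y ≤ x₀ + M * t := by
  have := sub_le_mul_travelTime_sub hbd hreg le_rfl hy.1 hy
  rw [travelTime_self, sub_zero] at this
  linarith [mul_le_mul_of_nonneg_left ht ((abs_nonneg _).trans (hbd 0))]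

theorem le_forwardSolution (hbd : ∀ y, |f y| ≤ M) (hreg : Regulated f fl fr) {t y : ℝ}
    (hy : y ∈ forwardRegion f x₀) (ht : travelTime f x₀ y ≤ t) : y ≤ forwardSolution f x₀ t :=
  le_csSup ⟨x₀ + M * t, fun _ hz => le_self_add_mul_of_travelTime_le hbd hreg hz.1 hz.2⟩ ⟨hy, ht⟩

theorem forwardSolution_le (hreg : Regulated f fl fr) (hpos : 0 < fr x₀) {t c : ℝ} (ht : 0 ≤ t)
    (h : ∀ y ∈ forwardRegion f x₀, travelTime f x₀ y ≤ t → y ≤ c) :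
    forwardSolution f x₀ t ≤ c :=
  csSup_le ⟨x₀, self_mem_forwardRegion hreg hpos, travelTime_self.trans_le ht⟩
    fun y hy => h y hy.1 hy.2

theorem self_le_forwardSolution (hbd : ∀ y, |f y| ≤ M) (hreg : Regulated f fl fr)
    (hpos : 0 < fr x₀) {t : ℝ} (ht : 0 ≤ t) : x₀ ≤ forwardSolution f x₀ t :=
  le_forwardSolution hbd hreg (self_mem_forwardRegion hreg hpos) (travelTime_self.trans_le ht)

theorem forwardSolution_zero (hbd : ∀ y, |f y| ≤ M) (hreg : Regulated f fl fr)
    (hpos : 0 < fr x₀) : forwardSolution f x₀ 0 = x₀ :=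
  (forwardSolution_le hreg hpos le_rfl fun _ hy ht => by
    simpa using le_self_add_mul_of_travelTime_le hbd hreg hy ht).antisymm
    (self_le_forwardSolution hbd hreg hpos le_rfl)

theorem monotoneOn_forwardSolution (hbd : ∀ y, |f y| ≤ M) (hreg : Regulated f fl fr)
    (hpos : 0 < fr x₀) : MonotoneOn (forwardSolution f x₀) (Ici 0) := fun _ ht _ _ htt' =>
  forwardSolution_le hreg hpos ht fun _ hy hyt => le_forwardSolution hbd hreg hy (hyt.trans htt')

theorem forwardSolution_travelTime (hbd : ∀ y, |f y| ≤ M) (hreg : Regulated f fl fr) {y : ℝ}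
    (hy : y ∈ forwardRegion f x₀) : forwardSolution f x₀ (travelTime f x₀ y) = y :=
  IsGreatest.csSup_eq ⟨⟨hy, le_rfl⟩, fun _ hz => not_lt.1 fun hyz =>
    (travelTime_lt_travelTime hbd hreg hy.1 hyz hz.1).not_ge hz.2⟩

theorem travelTime_forwardSolution (hbd : ∀ y, |f y| ≤ M) (hreg : Regulated f fl fr) {t : ℝ}
    (ht : 0 ≤ t) (hxt : forwardSolution f x₀ t ∈ forwardRegion f x₀) :
    travelTime f x₀ (forwardSolution f x₀ t) = t := by
  obtain ⟨y', hy'J, hy'⟩ := exists_gt_mem_forwardRegion hxt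
  have hty' : t < travelTime f x₀ y' :=
    lt_of_not_ge fun h => (le_forwardSolution hbd hreg hy'J h).not_gt hy'
  obtain ⟨y, hy, hyt⟩ := intermediate_value_Icc hy'J.1 (continuousOn_travelTime hreg hy'J)
    ⟨travelTime_self.trans_le ht, hty'.le⟩
  have := forwardSolution_travelTime hbd hreg (mem_forwardRegion_of_le hy'J hy.1 hy.2)
  rw [hyt] at this
  rw [this, hyt]

theorem isLUB_forwardSolution_of_notMem (hbd : ∀ y, |f y| ≤ M) (hreg : Regulated f fl fr)
    (hpos : 0 < fr x₀) {t : ℝ} (ht : 0 ≤ t) (hxt : forwardSolution f x₀ t ∉ forwardRegion f x₀) :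
    IsLUB (forwardRegion f x₀) (forwardSolution f x₀ t) :=
  ⟨fun _ hy => not_lt.1 fun hlt =>
      hxt (mem_forwardRegion_of_le hy (self_le_forwardSolution hbd hreg hpos ht) hlt.le),
    fun _ hc => forwardSolution_le hreg hpos ht fun _ hy _ => hc hy⟩

theorem forwardSolution_eq_of_notMem (hbd : ∀ y, |f y| ≤ M) (hreg : Regulated f fl fr)
    (hpos : 0 < fr x₀) {t t' : ℝ} (ht : 0 ≤ t)
    (hxt : forwardSolution f x₀ t ∉ forwardRegion f x₀) (htt' : t ≤ t') :
    forwardSolution f x₀ t' = forwardSolution f x₀ t :=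
  (forwardSolution_le hreg hpos (ht.trans htt') fun _ hy _ =>
    (isLUB_forwardSolution_of_notMem hbd hreg hpos ht hxt).1 hy).antisymm
    (monotoneOn_forwardSolution hbd hreg hpos ht (ht.trans htt') htt')

theorem forwardSolution_le_add_mul (hbd : ∀ y, |f y| ≤ M) (hreg : Regulated f fl fr)
    (hpos : 0 < fr x₀) {t t' : ℝ} (ht : 0 ≤ t) (htt' : t ≤ t') :
    forwardSolution f x₀ t' ≤ forwardSolution f x₀ t + M * (t' - t) := by
  have hM : 0 ≤ M := (abs_nonneg _).trans (hbd 0)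
  have hMt : 0 ≤ M * (t' - t) := mul_nonneg hM (sub_nonneg.2 htt')
  by_cases hxt : forwardSolution f x₀ t ∈ forwardRegion f x₀
  · refine forwardSolution_le hreg hpos (ht.trans htt') fun y hy hyt' => ?_
    rcases le_total y (forwardSolution f x₀ t) with h | h
    · linarith
    · have := sub_le_mul_travelTime_sub hbd hreg (self_le_forwardSolution hbd hreg hpos ht) h hy
      rw [travelTime_forwardSolution hbd hreg ht hxt] at this
      linarith [mul_le_mul_of_nonneg_left hyt' hM]
  · rw [forwardSolution_eq_of_notMem hbd hreg hpos ht hxt htt']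
    linarith

theorem continuousOn_forwardSolution (hbd : ∀ y, |f y| ≤ M) (hreg : Regulated f fl fr)
    (hpos : 0 < fr x₀) : ContinuousOn (forwardSolution f x₀) (Ici 0) := by
  have hM : 0 ≤ M := (abs_nonneg _).trans (hbd 0)
  refine (LipschitzOnWith.of_le_add_mul (Real.toNNReal M) fun t ht t' ht' => ?_).continuousOn
  rw [Real.coe_toNNReal _ hM, Real.dist_eq]
  rcases le_total t t' with h | h
  · linarith [monotoneOn_forwardSolution hbd hreg hpos ht ht' h,
      mul_nonneg hM (abs_nonneg (t - t'))]
  · rw [abs_of_nonneg (sub_nonneg.2 h)]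
    exact forwardSolution_le_add_mul hbd hreg hpos ht' h

theorem hasDerivAt_forwardSolution (hbd : ∀ y, |f y| ≤ M) (hreg : Regulated f fl fr)
    (hpos : 0 < fr x₀) {s : ℝ} (hs : 0 < s)
    (hxs : forwardSolution f x₀ s ∈ forwardRegion f x₀)
    (hf : ContinuousAt f (forwardSolution f x₀ s)) :
    HasDerivAt (forwardSolution f x₀) (f (forwardSolution f x₀ s)) s := by
  have hτ := travelTime_forwardSolution hbd hreg hs.le hxs
  have hx₀ : x₀ < forwardSolution f x₀ s :=
    lt_of_le_of_ne hxs.1 fun h => by rw [← h, travelTime_self] at hτ; linarith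
  have hcont : ContinuousAt (forwardSolution f x₀) s :=
    (continuousOn_forwardSolution hbd hreg hpos).continuousAt (Ici_mem_nhds hs)
  obtain ⟨y', hy'J, hy'⟩ := exists_gt_mem_forwardRegion hxs
  have hinv : ∀ᶠ t in 𝓝 s, travelTime f x₀ (forwardSolution f x₀ t) = t := by
    filter_upwards [lt_mem_nhds hs, hcont.eventually (gt_mem_nhds hy')] with t ht hxt
    exact travelTime_forwardSolution hbd hreg ht.le
      (mem_forwardRegion_of_le hy'J (self_le_forwardSolution hbd hreg hpos ht.le) hxt.le)
  simpa using (hasDerivAt_travelTime hreg hxs hx₀ hf).of_local_left_inverse hcont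
    (inv_ne_zero (pos_of_mem_forwardRegion_of_continuousAt hxs hx₀ hf).ne') hinv

theorem hasDerivAt_forwardSolution_of_notMem (hbd : ∀ y, |f y| ≤ M) (hreg : Regulated f fl fr)
    (hnj : NoJamming f fl fr) (hpos : 0 < fr x₀) {s₀ s : ℝ} (hs₀ : 0 ≤ s₀)
    (hxs₀ : forwardSolution f x₀ s₀ ∉ forwardRegion f x₀) (hs : s₀ < s) :
    HasDerivAt (forwardSolution f x₀) (f (forwardSolution f x₀ s)) s := by
  rw [forwardSolution_eq_of_notMem hbd hreg hpos hs₀ hxs₀ hs.le,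
    apply_eq_zero_of_isLUB_forwardRegion hreg hnj
      (isLUB_forwardSolution_of_notMem hbd hreg hpos hs₀ hxs₀)]
  refine (hasDerivAt_const s (forwardSolution f x₀ s₀)).congr_of_eventuallyEq ?_
  filter_upwards [lt_mem_nhds hs] with t ht
  exact forwardSolution_eq_of_notMem hbd hreg hpos hs₀ hxs₀ ht.le

theorem isCaratheodorySolution_forwardSolution (hbd : ∀ y, |f y| ≤ M)
    (hreg : Regulated f fl fr) (hnj : NoJamming f fl fr) (hpos : 0 < fr x₀) :
    IsCaratheodorySolution f x₀ (forwardSolution f x₀) := by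
  intro t ht
  set x := forwardSolution f x₀
  set J := forwardRegion f x₀
  set stall := {s | 0 ≤ s ∧ x s ∉ J}
  -- `x` can only fail to have derivative `f ∘ x` at times where it crosses a discontinuity of
  -- `f` (countably many, since `x` is injective while in `J`) and at the time it stalls.
  set crossings := {s | 0 < s ∧ x s ∈ J ∧ ¬ContinuousAt f (x s)}
  have hcrossings : crossings.Countable := by
    refine MapsTo.countable_of_injOn (fun s hs => hs.2.2) (fun s hs s' hs' hss' => ?_)
      (countable_not_continuousAt_of_tendsto_nhdsLT_nhdsGT hreg)
    calc s = travelTime f x₀ (x s) := (travelTime_forwardSolution hbd hreg hs.1.le hs.2.1).symm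
      _ = travelTime f x₀ (x s') := by rw [hss']
      _ = s' := travelTime_forwardSolution hbd hreg hs'.1.le hs'.2.1
  have hderiv : ∀ s ∈ Ioo 0 t \ (crossings ∪ {sInf stall}), HasDerivAt x (f (x s)) s := by
    rintro s ⟨hs, hsC⟩
    by_cases hxs : x s ∈ J
    · exact hasDerivAt_forwardSolution hbd hreg hpos hs.1 hxs
        (not_not.1 fun h => hsC (Or.inl ⟨hs.1, hxs, h⟩))
    · have hsK : s ∈ stall := ⟨hs.1.le, hxs⟩
      obtain ⟨s₀, ⟨hs₀, hxs₀⟩, hs₀s⟩ := exists_lt_of_csInf_lt ⟨s, hsK⟩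
        (lt_of_le_of_ne (csInf_le ⟨0, fun _ h => h.1⟩ hsK) fun h => hsC (Or.inr h.symm))
      exact hasDerivAt_forwardSolution_of_notMem hbd hreg hnj hpos hs₀ hxs₀ hs₀s
  have hC := hcrossings.union (countable_singleton (sInf stall))
  rw [integral_eq_of_hasDerivAt_off_countable_of_le x _ ht hC
    ((continuousOn_forwardSolution hbd hreg hpos).mono Icc_subset_Ici_self) hderiv
    (IntervalIntegrable.of_hasDerivAt_off_countable ht hC hderiv fun s => hbd _),
    show x 0 = x₀ from forwardSolution_zero hbd hreg hpos]
  ring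

end Forward

theorem isCaratheodorySolution_const {f : ℝ → ℝ} {x₀ : ℝ} (h : f x₀ = 0) :
    IsCaratheodorySolution f x₀ fun _ => x₀ := fun _ _ => by simp [h]

theorem IsCaratheodorySolution.neg {f x : ℝ → ℝ} {x₀ : ℝ}
    (hx : IsCaratheodorySolution (fun y => -f (-y)) (-x₀) x) :
    IsCaratheodorySolution f x₀ (-x) := fun t ht => by
  rw [Pi.neg_apply, hx t ht, intervalIntegral.integral_neg]
  simp only [Pi.neg_apply, neg_add_rev, neg_neg]
  ring

theorem Regulated.comp_neg {f fl fr : ℝ → ℝ} (hreg : Regulated f fl fr) :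
    Regulated (fun y => -f (-y)) (fun y => -fr (-y)) (fun y => -fl (-y)) := fun y =>
  ⟨((hreg (-y)).2.comp tendsto_neg_nhdsLT).neg, ((hreg (-y)).1.comp tendsto_neg_nhdsGT).neg⟩

theorem NoJamming.comp_neg {f fl fr : ℝ → ℝ} (hnj : NoJamming f fl fr) :
    NoJamming (fun y => -f (-y)) (fun y => -fr (-y)) (fun y => -fl (-y)) := by
  intro y hy
  show -f (-y) = 0
  rw [hnj (-y) ?_, neg_zero]
  rcases hy with h | ⟨h₁, h₂⟩
  · left; linarith
  · right; constructor <;> linarith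

/-- For every initial point there exists a globally defined Carathéodory solution
of `ẋ = f(x)`, `x(0) = x₀`. -/
theorem existence_of_caratheodory_solution
    (f : ℝ → ℝ) (M : ℝ) (hb : ∀ y : ℝ, |f y| ≤ M)
    (fl fr : ℝ → ℝ) (hreg : Regulated f fl fr) (hnj : NoJamming f fl fr)
    (x₀ : ℝ) :
    ∃ x : ℝ → ℝ, ∀ t : ℝ, 0 ≤ t → x t = x₀ + ∫ s in (0:ℝ)..t, f (x s) := by
  by_cases hr : 0 < fr x₀
  · exact ⟨_, isCaratheodorySolution_forwardSolution hb hreg hnj hr⟩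
  by_cases hl : fl x₀ < 0
  · exact ⟨_, (isCaratheodorySolution_forwardSolution (x₀ := -x₀)
      (fun y => by simpa using hb (-y)) hreg.comp_neg hnj.comp_neg (by simpa using hl)).neg⟩
  exact ⟨_, isCaratheodorySolution_const (hnj.eq_zero (not_lt.1 hl) fun h => hr h.2)⟩
end

section
/- Let f : ℝ → ℝ be bounded and regulated, and satisfy the no-jamming condition. Then every Carathéodory solution x : [0,∞) → ℝ of ẋ = f(x) is monotone: either x is nondecreasing on [0,∞) or x is nonincreasing on [0,∞). -/
/-!
If `x` is not monotone it has a strict peak (or a strict valley, which becomes a peak after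
replacing `f` by `z ↦ -f (-z)` and `x` by `-x`). Let `m` be the maximum of `x` over the peak and
`c₀ < m` the larger of the endpoint values. Every level `c ∈ (c₀, m)` is crossed upwards before the
maximum and downwards after it. Just after an upward crossing `x > c` and `ẋ = f(x)` is close to
`f(c+)`, so `f(c+) ≥ 0`; just before a downward crossing, likewise `f(c+) ≤ 0`. Thus `f(c+) = 0`
and no-jamming gives `f = 0` on `(c₀, m)`, a band of equilibria that `x` cannot cross, as
`x t - x s = ∫ₛᵗ f(x) = 0` along a passage through it.

Boundedness of `f` is what makes `f ∘ x` locally integrable: if integrability failed first at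
time `T`, then `x` would equal `x 0` after `T`, and `f ∘ x` would be integrable past `T` after all.
-/

open MeasureTheory Set Filter

open Topology

def IsCaratheodorySolutionOn (f x : ℝ → ℝ) (I : Set ℝ) : Prop :=
  ∀ a ∈ I, ∀ b ∈ I, IntervalIntegrable (fun s => f (x s)) volume a b ∧
    x b - x a = ∫ s in a..b, f (x s)

theorem exists_Ioo_mapsTo_Ioo {x : ℝ → ℝ} {a b p q : ℝ} (hab : a ≤ b)
    (hx : ContinuousOn x (Icc a b)) (ha : x a ≤ p) (hpq : p < q) (hb : q ≤ x b) :
    ∃ s t, a ≤ s ∧ s < t ∧ t ≤ b ∧ x s ≤ p ∧ q ≤ x t ∧ MapsTo x (Ioo s t) (Ioo p q) := by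
  have hbelow : IsCompact {r ∈ Icc a b | x r ≤ p} := isCompact_Icc.of_isClosed_subset
    (isClosed_Icc.isClosed_le hx continuousOn_const) (sep_subset _ _)
  obtain ⟨s, ⟨⟨has, hsb⟩, hxs⟩, hs_max⟩ :=
    hbelow.exists_isGreatest ⟨a, ⟨left_mem_Icc.2 hab, ha⟩⟩
  have habove : IsCompact {r ∈ Icc s b | q ≤ x r} := isCompact_Icc.of_isClosed_subset
    (isClosed_Icc.isClosed_le continuousOn_const (hx.mono (Icc_subset_Icc_left has)))
    (sep_subset _ _)
  obtain ⟨t, ⟨⟨hst, htb⟩, hxt⟩, ht_min⟩ := habove.exists_isLeast ⟨b, ⟨right_mem_Icc.2 hsb, hb⟩⟩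
  refine ⟨s, t, has, hst.lt_of_ne ?_, htb, hxs, hxt, fun r hr => ⟨?_, ?_⟩⟩
  · rintro rfl
    linarith
  · by_contra! h
    exact hr.1.not_ge (hs_max ⟨⟨has.trans hr.1.le, hr.2.le.trans htb⟩, h⟩)
  · by_contra! h
    exact hr.2.not_ge (ht_min ⟨⟨hr.1.le, hr.2.le.trans htb⟩, h⟩)

theorem integrableOn_Ioc_of_forall_lt {g : ℝ → ℝ} {a b M : ℝ} (hM : ∀ s, ‖g s‖ ≤ M)
    (hg : ∀ s ∈ Ioo a b, IntegrableOn g (Ioc a s)) : IntegrableOn g (Ioc a b) := by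
  rcases le_or_gt b a with hba | hab
  · simp [Ioc_eq_empty_of_le hba]
  obtain ⟨u, -, hu, hlim⟩ := exists_seq_strictMono_tendsto' hab
  refine integrableOn_Ioc_of_intervalIntegral_norm_bounded_right (I := M * (b - a))
    (fun n => hg _ (hu n)) hlim (Eventually.of_forall fun n => ?_)
  calc ∫ s in Ioc a (u n), ‖g s‖
      ≤ ‖∫ s in Ioc a (u n), ‖g s‖‖ := Real.le_norm_self _
    _ ≤ M * volume.real (Ioc a (u n)) :=
        norm_setIntegral_le_of_norm_le_const measure_Ioc_lt_top fun s _ => by simpa using hM s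
    _ ≤ M * (b - a) := by
        rw [Real.volume_real_Ioc_of_le (hu n).1.le]
        exact mul_le_mul_of_nonneg_left (by linarith [(hu n).2]) ((norm_nonneg _).trans (hM a))

theorem intervalIntegrable_of_forall_eq_add_integral {f x : ℝ → ℝ} {M : ℝ}
    (hb : ∀ y, |f y| ≤ M) (hsol : ∀ t, 0 ≤ t → x t = x 0 + ∫ s in (0:ℝ)..t, f (x s))
    {t : ℝ} (ht : 0 ≤ t) : IntervalIntegrable (fun s => f (x s)) volume 0 t := by
  set g := fun s => f (x s)
  by_contra hbad
  set B := {t : ℝ | 0 ≤ t ∧ ¬IntervalIntegrable g volume 0 t}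
  have hBne : B.Nonempty := ⟨t, ht, hbad⟩
  set T := sInf B
  have hT : 0 ≤ T := le_csInf hBne fun _ h => h.1
  have hgood : ∀ s ∈ Ioo 0 T, IntegrableOn g (Ioc 0 s) := fun s hs =>
    (intervalIntegrable_iff_integrableOn_Ioc_of_le hs.1.le).mp <| by
      by_contra h
      exact (csInf_le (⟨0, fun _ h => h.1⟩ : BddBelow B) ⟨hs.1.le, h⟩).not_gt hs.2
  have hbad : ∀ s, T < s → ¬IntervalIntegrable g volume 0 s := fun s hs h => by
    obtain ⟨r, ⟨hr, hrB⟩, hrs⟩ := exists_lt_of_csInf_lt hBne hs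
    refine hrB (h.mono_set ?_)
    rw [uIcc_of_le hr, uIcc_of_le (hr.trans hrs.le)]
    exact Icc_subset_Icc_right hrs.le
  have hbefore : IntegrableOn g (Ioc 0 T) :=
    integrableOn_Ioc_of_forall_lt (fun s => hb (x s)) hgood
  -- past `T` the integral in `hsol` takes the junk value `0`, so `x = x 0` there
  have hafter : IntegrableOn g (Ioc T (T + 1)) := by
    refine (integrableOn_const (C := f (x 0)) (by simp)).congr_fun (fun s hs => ?_)
      measurableSet_Ioc
    simp only [g, hsol s (hT.trans hs.1.le), intervalIntegral.integral_undef (hbad s hs.1),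
      add_zero]
  refine hbad (T + 1) (by linarith) ?_
  rw [intervalIntegrable_iff_integrableOn_Ioc_of_le (by linarith),
    ← Ioc_union_Ioc_eq_Ioc hT (by linarith)]
  exact hbefore.union hafter

theorem IsCaratheodorySolutionOn.of_forall_eq_add_integral {f x : ℝ → ℝ} {M : ℝ}
    (hb : ∀ y, |f y| ≤ M) (hsol : ∀ t, 0 ≤ t → x t = x 0 + ∫ s in (0:ℝ)..t, f (x s)) :
    IsCaratheodorySolutionOn f x (Ici 0) := by
  intro a ha b hb'
  have ha₀ := intervalIntegrable_of_forall_eq_add_integral hb hsol ha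
  have hab := ha₀.symm.trans (intervalIntegrable_of_forall_eq_add_integral hb hsol hb')
  refine ⟨hab, ?_⟩
  rw [hsol a ha, hsol b hb', ← intervalIntegral.integral_add_adjacent_intervals ha₀ hab]
  ring

namespace IsCaratheodorySolutionOn

variable {f x : ℝ → ℝ}

theorem mono {I J : Set ℝ} (h : IsCaratheodorySolutionOn f x I) (hJ : J ⊆ I) :
    IsCaratheodorySolutionOn f x J :=
  fun a ha b hb => h a (hJ ha) b (hJ hb)

theorem neg {I : Set ℝ} (h : IsCaratheodorySolutionOn f x I) :
    IsCaratheodorySolutionOn (fun z => -f (-z)) (fun t => -x t) I := by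
  intro a ha b hb
  obtain ⟨hint, heq⟩ := h a ha b hb
  simp only [neg_neg, intervalIntegral.integral_neg, ← heq]
  exact ⟨hint.neg, by ring⟩

theorem comp_neg {I : Set ℝ} (h : IsCaratheodorySolutionOn f x I) :
    IsCaratheodorySolutionOn (fun z => -f z) (fun t => x (-t)) (-I) := by
  intro a ha b hb
  obtain ⟨hint, heq⟩ := h (-a) ha (-b) hb
  have hint' := (IntervalIntegrable.iff_comp_neg (f := fun s => f (x s))).mp hint
  rw [neg_neg, neg_neg] at hint'
  refine ⟨hint'.neg, ?_⟩
  rw [intervalIntegral.integral_neg, intervalIntegral.integral_comp_neg (fun s => f (x s)),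
    intervalIntegral.integral_symm, heq, neg_neg]

theorem continuousOn {a b : ℝ} (h : IsCaratheodorySolutionOn f x (Icc a b)) :
    ContinuousOn x (Icc a b) := by
  rcases lt_or_ge b a with hba | hab
  · simp [Icc_eq_empty_of_lt hba]
  have ha : a ∈ Icc a b := left_mem_Icc.2 hab
  have hprim := intervalIntegral.continuousOn_primitive_interval' (h a ha b (right_mem_Icc.2 hab)).1
    (left_mem_uIcc (a := a) (b := b))
  rw [uIcc_of_le hab] at hprim
  refine ((continuousOn_const (c := x a)).add hprim).congr fun t ht => ?_
  simp only [Pi.add_apply]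
  linarith [(h a ha t ht).2]

theorem not_cross_of_eqOn_zero {a b p q : ℝ} (h : IsCaratheodorySolutionOn f x (Icc a b))
    (hab : a ≤ b) (ha : x a ≤ p) (hpq : p < q) (hb : q ≤ x b) (hf : EqOn f 0 (Ioo p q)) :
    False := by
  obtain ⟨s, t, has, hst, htb, hxs, hxt, hmaps⟩ :=
    exists_Ioo_mapsTo_Ioo hab h.continuousOn ha hpq hb
  have hzero : ∫ r in s..t, f (x r) = 0 := by
    rw [intervalIntegral.integral_of_le hst.le, integral_Ioc_eq_integral_Ioo]
    exact setIntegral_eq_zero_of_forall_eq_zero fun r hr => hf (hmaps hr)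
  have := (h s ⟨has, hst.le.trans htb⟩ t ⟨has.trans hst.le, htb⟩).2
  linarith

theorem nonneg_of_tendsto_nhdsGT {s t c L : ℝ} (h : IsCaratheodorySolutionOn f x (Icc s t))
    (hst : s < t) (hs : x s ≤ c) (habove : ∀ r ∈ Ioo s t, c < x r)
    (hL : Tendsto f (𝓝[>] c) (𝓝 L)) : 0 ≤ L := by
  by_contra! hL₀
  obtain ⟨c', hcc', hneg⟩ := mem_nhdsGT_iff_exists_Ioo_subset.mp (hL.eventually_lt_const hL₀)
  have hxs : Tendsto x (𝓝[>] s) (𝓝 (x s)) :=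
    (h.continuousOn s (left_mem_Icc.2 hst.le)).mono_of_mem_nhdsWithin (Icc_mem_nhdsGT hst)
  obtain ⟨r, hsr, hr⟩ := mem_nhdsGT_iff_exists_Ioo_subset.mp
    (inter_mem (Ioo_mem_nhdsGT hst) (hxs.eventually_lt_const (hs.trans_lt hcc')))
  obtain ⟨r', hsr', hr'r⟩ := exists_between (mem_Ioi.mp hsr)
  have hr' : r' ∈ Ioo s t := (hr ⟨hsr', hr'r⟩).1
  have hdecr : ∫ τ in s..r', f (x τ) < 0 := by
    have hint := (h s (left_mem_Icc.2 hst.le) r' (Ioo_subset_Icc_self hr')).1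
    have := intervalIntegral.intervalIntegral_pos_of_pos_on hint.neg (fun τ hτ => by
      obtain ⟨hτt, hxτ⟩ := hr ⟨hτ.1, hτ.2.trans hr'r⟩
      exact neg_pos.2 (hneg ⟨habove τ hτt, hxτ⟩)) hsr'
    simpa [intervalIntegral.integral_neg] using this
  have := (h s (left_mem_Icc.2 hst.le) r' (Ioo_subset_Icc_self hr')).2
  linarith [habove r' hr']

theorem nonpos_of_tendsto_nhdsGT {s t c L : ℝ} (h : IsCaratheodorySolutionOn f x (Icc s t))
    (hst : s < t) (ht : x t ≤ c) (habove : ∀ r ∈ Ioo s t, c < x r)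
    (hL : Tendsto f (𝓝[>] c) (𝓝 L)) : L ≤ 0 := by
  have hrev := h.comp_neg
  rw [neg_Icc] at hrev
  exact neg_nonneg.mp <| hrev.nonneg_of_tendsto_nhdsGT (neg_lt_neg hst) (by rwa [neg_neg])
    (fun r hr => habove (-r) ⟨lt_neg.mp hr.2, neg_lt.mp hr.1⟩) hL.neg

theorem eq_zero_of_tendsto_nhdsGT {a τ b c L : ℝ} (h : IsCaratheodorySolutionOn f x (Icc a b))
    (hτ : τ ∈ Icc a b) (ha : x a ≤ c) (hc : c < x τ) (hb : x b ≤ c)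
    (hL : Tendsto f (𝓝[>] c) (𝓝 L)) : L = 0 := by
  have hcont := h.continuousOn
  obtain ⟨s, t, has, hst, htτ, hxs, -, hup⟩ :=
    exists_Ioo_mapsTo_Ioo hτ.1 (hcont.mono (Icc_subset_Icc_right hτ.2)) ha hc le_rfl
  obtain ⟨s', t', hτs', hst', htb, -, hxt', hdown⟩ := exists_Ioo_mapsTo_Ioo (x := fun r => -x r)
    hτ.2 (hcont.mono (Icc_subset_Icc_left hτ.1)).neg le_rfl (neg_lt_neg hc) (neg_le_neg hb)
  refine le_antisymm ?_ ?_
  · exact (h.mono (Icc_subset_Icc (hτ.1.trans hτs') htb)).nonpos_of_tendsto_nhdsGT hst'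
      (neg_le_neg_iff.mp hxt') (fun r hr => neg_lt_neg_iff.mp (hdown hr).2) hL
  · exact (h.mono (Icc_subset_Icc has (htτ.trans hτ.2))).nonneg_of_tendsto_nhdsGT hst hxs
      (fun r hr => (hup hr).1) hL

theorem not_peak {fr : ℝ → ℝ} {u v w : ℝ} (hfr : ∀ c, Tendsto f (𝓝[>] c) (𝓝 (fr c)))
    (hzero : ∀ c, fr c = 0 → f c = 0) (h : IsCaratheodorySolutionOn f x (Icc u w))
    (huv : u < v) (hvw : v < w) (hu : x u < x v) (hw : x w < x v) : False := by
  obtain ⟨τ, hτ, hmax⟩ :=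
    isCompact_Icc.exists_isMaxOn (nonempty_Icc.2 (huv.trans hvw).le) h.continuousOn
  have hvτ : x v ≤ x τ := hmax ⟨huv.le, hvw.le⟩
  have hc₀ : max (x u) (x w) < x τ := max_lt (hu.trans_le hvτ) (hw.trans_le hvτ)
  refine (h.mono (Icc_subset_Icc_right hτ.2)).not_cross_of_eqOn_zero hτ.1 (le_max_left _ _) hc₀
    le_rfl fun c hc => hzero c ?_
  exact h.eq_zero_of_tendsto_nhdsGT hτ ((le_max_left _ _).trans hc.1.le) hc.2
    ((le_max_right _ _).trans hc.1.le) (hfr c)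

end IsCaratheodorySolutionOn

/-- Every Carathéodory solution of `ẋ = f(x)` on `[0,∞)` is monotone:
either nondecreasing or nonincreasing on `[0,∞)`. -/
theorem caratheodory_solution_monotone
    (f : ℝ → ℝ) (M : ℝ) (hb : ∀ y : ℝ, |f y| ≤ M)
    (fl fr : ℝ → ℝ) (hreg : Regulated f fl fr) (hnj : NoJamming f fl fr)
    (x : ℝ → ℝ)
    (hsol : ∀ t : ℝ, 0 ≤ t → x t = x 0 + ∫ s in (0:ℝ)..t, f (x s)) :
    MonotoneOn x (Set.Ici 0) ∨ AntitoneOn x (Set.Ici 0) := by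
  have hx := IsCaratheodorySolutionOn.of_forall_eq_add_integral hb hsol
  have hfl : ∀ c, Tendsto (fun z => -f (-z)) (𝓝[>] c) (𝓝 (-fl (-c))) := fun c =>
    ((hreg (-c)).1.comp tendsto_neg_nhdsGT).neg
  by_contra hmono
  obtain ⟨u, hu, v, -, w, -, huv, hvw, hdent⟩ :=
    not_monotoneOn_not_antitoneOn_iff_exists_lt_lt.mp (not_or.mp hmono)
  have hxuw : IsCaratheodorySolutionOn f x (Icc u w) := hx.mono fun t ht => le_trans hu ht.1
  rcases hdent with ⟨hvu, hwv⟩ | ⟨hvu, hwv⟩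
  · exact hxuw.not_peak (fun c => (hreg c).2) (fun c hc => hnj c (Or.inl (by rw [hc, mul_zero])))
      huv hvw hvu hwv
  · refine hxuw.neg.not_peak hfl (fun c hc => ?_) huv hvw (neg_lt_neg hvu) (neg_lt_neg hwv)
    rw [hnj (-c) (Or.inl (by rw [neg_eq_zero.mp hc, zero_mul])), neg_zero]
end

section
/- Let f : ℝ → ℝ be bounded and regulated, and satisfy the no-jamming condition. Then the zero set f⁻¹(0) = {x ∈ ℝ : f(x) = 0} is closed. -/
open MeasureTheory Set Filter

/-- Under (A1)-(A2), the zero set `f⁻¹(0)` is closed. -/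
theorem zero_set_closed
    (f : ℝ → ℝ) (M : ℝ) (hb : ∀ y : ℝ, |f y| ≤ M)
    (fl fr : ℝ → ℝ) (hreg : Regulated f fl fr) (hnj : NoJamming f fl fr) :
    IsClosed {x : ℝ | f x = 0} := by
  set S : Set ℝ := {x : ℝ | f x = 0} with hS
  rw [← closure_subset_iff_isClosed]
  intro y hy
  -- key: if y is in closure of S ∩ (Iio y) then fl y = 0; similarly right.
  have key : ∀ (T : Set ℝ) (L : ℝ), Tendsto f (nhdsWithin y T) (nhds L) →
      y ∈ closure (S ∩ T) → L = 0 := by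
    intro T L hT hc
    have hne : (nhdsWithin y (S ∩ T)).NeBot := mem_closure_iff_nhdsWithin_neBot.mp hc
    have h1 : Tendsto f (nhdsWithin y (S ∩ T)) (nhds L) :=
      hT.mono_left (nhdsWithin_mono _ inter_subset_right)
    have h2 : Tendsto f (nhdsWithin y (S ∩ T)) (nhds 0) := by
      have : f =ᶠ[nhdsWithin y (S ∩ T)] (fun _ => 0) := by
        filter_upwards [self_mem_nhdsWithin] with x hx
        exact hx.1
      exact Tendsto.congr' this.symm tendsto_const_nhds
    exact tendsto_nhds_unique h1 h2
  by_cases hyS : y ∈ S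
  · exact hyS
  · -- S ⊆ (S ∩ Iio y) ∪ (S ∩ Ioi y) since y ∉ S
    have hsub : S ⊆ (S ∩ Iio y) ∪ (S ∩ Ioi y) := by
      intro x hx
      rcases lt_trichotomy x y with h | h | h
      · exact Or.inl ⟨hx, h⟩
      · exact absurd (h ▸ hx) hyS
      · exact Or.inr ⟨hx, h⟩
    have := closure_mono hsub hy
    rw [closure_union] at this
    rcases this with h | h
    · have := key (Iio y) (fl y) (hreg y).1 h
      exact hnj y (Or.inl (by rw [this, zero_mul]))
    · have := key (Ioi y) (fr y) (hreg y).2 h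
      exact hnj y (Or.inl (by rw [this, mul_zero]))
end

section
/- Let f : ℝ → ℝ be bounded and regulated, and satisfy the no-jamming condition. Define f⁺(y) = max{f(y),0} and f⁻(y) = min{f(y),0}, and let R⁻ = {x ∈ ℝ : ∫_{x−ε}^{x} 1/f⁻(y) dy > −∞ for some ε > 0} and R⁺ = {x ∈ ℝ : ∫_{x}^{x+ε} 1/f⁺(y) dy < +∞ for some ε > 0}. Then every point x₀ not belonging to R⁻ ∪ R⁺ satisfies f(x₀) = 0; that is, the set Ω₀ = ℝ \ (R⁻ ∪ R⁺) is contained in f⁻¹(0). -/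
open MeasureTheory Set Filter

/-- The set `R⁻` of points from which a strictly decreasing solution can start:
`∫_{x−ε}^{x} 1/f⁻(y) dy > −∞` for some `ε > 0`, where `1/f⁻ = −∞` on `{f⁻ = 0}`. -/
def Rminus (f : ℝ → ℝ) : Set ℝ :=
  {x : ℝ | ∃ ε : ℝ, 0 < ε ∧
    ∫⁻ y in Set.Ico (x - ε) x, (ENNReal.ofReal (max (-(f y)) 0))⁻¹ < ⊤}

/-- The set `R⁺` of points from which a strictly increasing solution can start:
`∫_{x}^{x+ε} 1/f⁺(y) dy < +∞` for some `ε > 0`, where `1/f⁺ = +∞` on `{f⁺ = 0}`. -/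
def Rplus (f : ℝ → ℝ) : Set ℝ :=
  {x : ℝ | ∃ ε : ℝ, 0 < ε ∧
    ∫⁻ y in Set.Ioc x (x + ε), (ENNReal.ofReal (max (f y) 0))⁻¹ < ⊤}

/-- Every point from which neither an increasing nor a decreasing solution can
start is a zero of `f`: `Ω₀ = ℝ \ (R⁻ ∪ R⁺) ⊆ f⁻¹(0)`. -/
theorem omega_zero_subset_zero_set
    (f : ℝ → ℝ) (M : ℝ) (hb : ∀ y : ℝ, |f y| ≤ M)
    (fl fr : ℝ → ℝ) (hreg : Regulated f fl fr) (hnj : NoJamming f fl fr)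
    (x₀ : ℝ) (hx₀ : x₀ ∉ Rminus f ∪ Rplus f) :
    f x₀ = 0 := by
  by_contra hf
  rw [Set.mem_union, not_or] at hx₀
  obtain ⟨hminus, hplus⟩ := hx₀
  have hfl : fl x₀ ≠ 0 := fun h => hf (hnj x₀ (Or.inl (by rw [h]; ring)))
  have hfr : fr x₀ ≠ 0 := fun h => hf (hnj x₀ (Or.inl (by rw [h]; ring)))
  have hnotj : ¬ (0 < fl x₀ ∧ fr x₀ < 0) := fun h => hf (hnj x₀ (Or.inr h))
  rcases lt_or_gt_of_ne hfr with hr | hr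
  · -- fr x₀ < 0, so fl x₀ < 0, contradict x₀ ∉ Rminus
    have hl : fl x₀ < 0 := by
      rcases lt_or_gt_of_ne hfl with h | h
      · exact h
      · exact absurd ⟨h, hr⟩ hnotj
    have hev : ∀ᶠ y in nhdsWithin x₀ (Set.Iio x₀), f y < fl x₀ / 2 :=
      (hreg x₀).1.eventually (eventually_lt_nhds (by linarith))
    obtain ⟨u, hu, hsub⟩ := mem_nhdsLT_iff_exists_Ioo_subset.mp hev
    simp only [Set.mem_Iio] at hu
    apply hminus
    refine ⟨(x₀ - u)/2, by linarith, ?_⟩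
    set C : ENNReal := (ENNReal.ofReal (-(fl x₀)/2))⁻¹ with hC
    have hbd : ∀ y ∈ Set.Ico (x₀ - (x₀ - u)/2) x₀,
        (ENNReal.ofReal (max (-(f y)) 0))⁻¹ ≤ C := by
      intro y hy
      have hy' : y ∈ Set.Ioo u x₀ := ⟨by linarith [hy.1], hy.2⟩
      have hfy : f y < fl x₀ / 2 := hsub hy'
      apply ENNReal.inv_le_inv'
      apply ENNReal.ofReal_le_ofReal
      have : -(fl x₀)/2 ≤ -(f y) := by linarith
      exact le_max_of_le_left this
    calc ∫⁻ y in Set.Ico (x₀ - (x₀ - u)/2) x₀, (ENNReal.ofReal (max (-(f y)) 0))⁻¹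
        ≤ ∫⁻ _ in Set.Ico (x₀ - (x₀ - u)/2) x₀, C :=
          setLIntegral_mono' measurableSet_Ico hbd
      _ = C * volume (Set.Ico (x₀ - (x₀ - u)/2) x₀) := setLIntegral_const _ _
      _ < ⊤ := by
          apply ENNReal.mul_lt_top
          · simp only [hC, ENNReal.inv_lt_top]
            exact ENNReal.ofReal_pos.mpr (by linarith)
          · rw [Real.volume_Ico]
            exact ENNReal.ofReal_lt_top
  · -- fr x₀ > 0, contradict x₀ ∉ Rplus
    have hev : ∀ᶠ y in nhdsWithin x₀ (Set.Ioi x₀), fr x₀ / 2 < f y :=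
      (hreg x₀).2.eventually (eventually_gt_nhds (by linarith))
    obtain ⟨u, hu, hsub⟩ := mem_nhdsGT_iff_exists_Ioo_subset.mp hev
    simp only [Set.mem_Ioi] at hu
    apply hplus
    refine ⟨(u - x₀)/2, by linarith, ?_⟩
    set C : ENNReal := (ENNReal.ofReal (fr x₀/2))⁻¹ with hC
    have hbd : ∀ y ∈ Set.Ioc x₀ (x₀ + (u - x₀)/2),
        (ENNReal.ofReal (max (f y) 0))⁻¹ ≤ C := by
      intro y hy
      have hy' : y ∈ Set.Ioo x₀ u := ⟨hy.1, by linarith [hy.2]⟩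
      have hfy : fr x₀ / 2 < f y := hsub hy'
      apply ENNReal.inv_le_inv'
      apply ENNReal.ofReal_le_ofReal
      exact le_max_of_le_left (le_of_lt hfy)
    calc ∫⁻ y in Set.Ioc x₀ (x₀ + (u - x₀)/2), (ENNReal.ofReal (max (f y) 0))⁻¹
        ≤ ∫⁻ _ in Set.Ioc x₀ (x₀ + (u - x₀)/2), C :=
          setLIntegral_mono' measurableSet_Ioc hbd
      _ = C * volume (Set.Ioc x₀ (x₀ + (u - x₀)/2)) := setLIntegral_const _ _
      _ < ⊤ := by
          apply ENNReal.mul_lt_top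
          · simp only [hC, ENNReal.inv_lt_top]
            exact ENNReal.ofReal_pos.mpr (by linarith)
          · rw [Real.volume_Ioc]
            exact ENNReal.ofReal_lt_top
end

section
/- Let f : ℝ → ℝ be bounded and regulated, and satisfy the no-jamming condition. Let x : [0,τ] → ℝ be a strictly increasing Carathéodory solution of ẋ = f(x), x(0) = x₀. Then there exists a positive, atomless Borel measure μ on ℝ, supported on the set f⁻¹(0), such that ∫_{x₀}^{x(t)} 1/f(s) ds + μ([x₀, x(t)]) = t for all t ∈ [0,τ]. -/
/-!
Let `Z` be the set of times `u ∈ (0, τ]` at which the solution stalls, `f (x u) = 0`, and let `μ`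
be the image under `x` of Lebesgue measure on `Z`. The solution is Lipschitz, increasing and
a.e. differentiable with `x' = f ∘ x`, so the change of variables `y = x u` gives
`∫_{x₀}^{x t} 1/f = ∫_0^t x'/(f ∘ x) = |(0, t] \ Z|`, while `μ [x₀, x t] = |(0, t] ∩ Z|`; the two
add up to `t`. Injectivity of `x` makes `μ` atomless, and `μ` lives on `x '' Z ⊆ f⁻¹(0)`.
-/

open MeasureTheory Set Filter

theorem LipschitzOnWith.volume_image_eq_zero {K : NNReal} {F : ℝ → ℝ} {s : Set ℝ}
    (hF : LipschitzOnWith K F s) (hs : volume s = 0) : volume (F '' s) = 0 := by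
  have h := hF.hausdorffMeasure_image_le zero_le_one
  rw [hausdorffMeasure_real, hs, mul_zero] at h
  exact le_antisymm h zero_le

theorem integral_Icc_deriv_smul_of_monotoneOn_of_lipschitzOnWith
    {E : Type*} [NormedAddCommGroup E] [NormedSpace ℝ E] {F F' : ℝ → ℝ} {a b : ℝ} {K : NNReal}
    (hab : a ≤ b) (hlip : LipschitzOnWith K F (Icc a b)) (hmono : MonotoneOn F (Icc a b))
    (hderiv : ∀ᵐ u, u ∈ Ioo a b → HasDerivAt F (F' u) u) (g : ℝ → E) :
    ∫ u in Icc a b, F' u • g (F u) = ∫ y in Icc (F a) (F b), g y := by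
  obtain ⟨N, hNsub, hNm, hN⟩ := exists_measurable_superset_of_null (ae_iff.1 hderiv)
  set s := Ioo a b \ N
  have hsIcc : s ⊆ Icc a b := sdiff_subset.trans Ioo_subset_Icc_self
  have hs_null : volume (Icc a b \ s) = 0 := by
    refine measure_mono_null (t := {a, b} ∪ N) ?_
      (measure_union_null ((toFinite _).measure_zero _) hN)
    intro u ⟨hu, hus⟩
    by_cases huN : u ∈ N
    · exact Or.inr huN
    · grind
  have hderiv_s : ∀ u ∈ s, HasDerivWithinAt F (F' u) s u := by
    intro u hu
    have : u ∈ Ioo a b → HasDerivAt F (F' u) u := by_contra fun h => hu.2 (hNsub h)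
    exact (this hu.1).hasDerivWithinAt
  -- Lipschitz continuity gives Lusin's property (N): the points without derivative have null image
  have himage : F '' s =ᵐ[volume] Icc (F a) (F b) := by
    rw [← hlip.continuousOn.image_Icc_of_monotoneOn hab hmono]
    refine ae_eq_set.2 ⟨by simp [sdiff_eq_empty.2 (image_mono hsIcc)], measure_mono_null ?_
      ((hlip.mono sdiff_subset).volume_image_eq_zero hs_null)⟩
    rintro _ ⟨⟨u, hu, rfl⟩, hus⟩
    exact ⟨u, ⟨hu, fun h => hus ⟨u, h, rfl⟩⟩, rfl⟩
  have hs : s =ᵐ[volume] Icc a b := ae_eq_set.2 ⟨by simp [sdiff_eq_empty.2 hsIcc], hs_null⟩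
  rw [← setIntegral_congr_set himage, ← setIntegral_congr_set hs,
    integral_image_eq_integral_deriv_smul_of_monotoneOn (measurableSet_Ioo.diff hNm) hderiv_s
      (hmono.mono hsIcc)]

theorem integral_mul_inv_self_add_volume_setOf_eq_zero {G : ℝ → ℝ} {a b : ℝ} (hab : a ≤ b)
    (hG : AEStronglyMeasurable G (volume.restrict (Ioc a b))) :
    (∫ u in a..b, G u * (G u)⁻¹) + (volume {u | u ∈ Ioc a b ∧ G u = 0}).toReal = b - a := by
  set Z := {u | G u = 0}
  have hZ : NullMeasurableSet Z (volume.restrict (Ioc a b)) :=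
    hG.nullMeasurableSet_eq_fun aestronglyMeasurable_const
  have hGG : (fun u => G u * (G u)⁻¹) = Zᶜ.indicator fun _ => 1 := by
    ext u
    by_cases hu : G u = 0 <;> simp [Z, hu]
  have hZ' : {u | u ∈ Ioc a b ∧ G u = 0} = Z ∩ Ioc a b := inter_comm _ _
  rw [intervalIntegral.integral_of_le hab, hGG, integral_indicator₀ hZ.compl, setIntegral_const,
    smul_eq_mul, mul_one, hZ', ← Measure.restrict_apply₀ hZ, measureReal_def,
    ← ENNReal.toReal_add (measure_ne_top _ _) (measure_ne_top _ _),
    add_comm, measure_add_measure_compl₀ hZ, Measure.restrict_apply_univ, Real.volume_Ioc,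
    ENNReal.toReal_ofReal (sub_nonneg.2 hab)]

section Primitive

variable {x g : ℝ → ℝ} {a b c : ℝ}

theorem intervalIntegrable_of_strictMonoOn_of_eq_add_integral (hab : a ≤ b)
    (hmono : StrictMonoOn x (Icc a b)) (hsol : ∀ t ∈ Icc a b, x t = c + ∫ s in a..t, g s) :
    IntervalIntegrable g volume a b := by
  by_contra hg
  -- an integral over a non-integrable function is `0`, which would force `x a = x b`
  have hxab : x a = x b := by
    rw [hsol a (left_mem_Icc.2 hab), hsol b (right_mem_Icc.2 hab),
      intervalIntegral.integral_same, intervalIntegral.integral_undef hg]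
  obtain rfl := hmono.injOn (left_mem_Icc.2 hab) (right_mem_Icc.2 hab) hxab
  exact hg (IntervalIntegrable.refl)

theorem ae_hasDerivAt_of_eq_add_integral (hg : IntervalIntegrable g volume a b)
    (hsol : ∀ t ∈ Icc a b, x t = c + ∫ s in a..t, g s) :
    ∀ᵐ u, u ∈ Ioo a b → HasDerivAt x (g u) u := by
  filter_upwards [hg.ae_hasDerivAt_integral] with u hu hab
  refine ((hu (Ioo_subset_Icc_self.trans Icc_subset_uIcc hab) a left_mem_uIcc).const_add c
    ).congr_of_eventuallyEq ?_
  filter_upwards [Icc_mem_nhds hab.1 hab.2] using hsol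

theorem lipschitzOnWith_of_eq_add_integral {M : ℝ} (hg : IntervalIntegrable g volume a b)
    (hM : ∀ y, ‖g y‖ ≤ M) (hsol : ∀ t ∈ Icc a b, x t = c + ∫ s in a..t, g s) :
    LipschitzOnWith M.toNNReal x (Icc a b) := by
  refine LipschitzOnWith.of_dist_le_mul fun s hs t ht => ?_
  have hint : ∀ r ∈ Icc a b, IntervalIntegrable g volume a r := fun r hr =>
    hg.mono_set (uIcc_subset_uIcc left_mem_uIcc (Icc_subset_uIcc hr))
  rw [hsol s hs, hsol t ht, dist_add_left, dist_eq_norm,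
    intervalIntegral.integral_interval_sub_left (hint s hs) (hint t ht), Real.dist_eq]
  exact (intervalIntegral.norm_integral_le_of_norm_le_const fun y _ => hM y).trans
    (mul_le_mul_of_nonneg_right (Real.le_coe_toNNReal M) (abs_nonneg _))

end Primitive

noncomputable def stallingMeasure (f x : ℝ → ℝ) (τ : ℝ) : Measure ℝ :=
  (volume.restrict {u | u ∈ Ioc 0 τ ∧ f (x u) = 0}).map x

section StallingMeasure

variable {f x : ℝ → ℝ} {τ : ℝ}

theorem stallingMeasure_apply (hx : ContinuousOn x (Icc 0 τ)) {A : Set ℝ}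
    (hA : MeasurableSet A) :
    stallingMeasure f x τ A = volume {u | u ∈ Ioc 0 τ ∧ f (x u) = 0 ∧ x u ∈ A} := by
  have hxm : AEMeasurable x (volume.restrict {u | u ∈ Ioc 0 τ ∧ f (x u) = 0}) :=
    (hx.aemeasurable measurableSet_Icc).mono_measure
      (Measure.restrict_mono (fun u hu => Ioc_subset_Icc_self hu.1) le_rfl)
  rw [stallingMeasure, Measure.map_apply_of_aemeasurable hxm hA,
    Measure.restrict_apply₀ (hxm.nullMeasurableSet_preimage hA)]
  congr 1
  ext u
  simp only [mem_inter_iff, mem_preimage, mem_ofPred_eq]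
  tauto

theorem stallingMeasure_singleton (hx : ContinuousOn x (Icc 0 τ)) (hinj : InjOn x (Ioc 0 τ))
    (y : ℝ) :
    stallingMeasure f x τ {y} = 0 := by
  rw [stallingMeasure_apply hx (measurableSet_singleton y)]
  refine Subsingleton.measure_zero (fun u hu v hv => hinj hu.1 hv.1 ?_) _
  rw [hu.2.2, hv.2.2]

theorem stallingMeasure_eq_zero_of_forall_ne_zero (hx : ContinuousOn x (Icc 0 τ)) {A : Set ℝ}
    (hA : MeasurableSet A) (hfA : ∀ a ∈ A, f a ≠ 0) : stallingMeasure f x τ A = 0 := by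
  rw [stallingMeasure_apply hx hA]
  convert measure_empty (μ := volume)
  exact eq_empty_of_forall_notMem fun u hu => hfA _ hu.2.2 hu.2.1

theorem stallingMeasure_Icc (hmono : StrictMonoOn x (Icc 0 τ)) (hx : ContinuousOn x (Icc 0 τ))
    {t : ℝ} (ht : t ∈ Icc 0 τ) :
    stallingMeasure f x τ (Icc (x 0) (x t)) = volume {u | u ∈ Ioc 0 t ∧ f (x u) = 0} := by
  rw [stallingMeasure_apply hx measurableSet_Icc]
  congr 1
  ext u
  have h0 : (0 : ℝ) ∈ Icc 0 τ := ⟨le_rfl, ht.1.trans ht.2⟩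
  constructor
  · rintro ⟨hu, hfu, hxu⟩
    exact ⟨⟨hu.1, (hmono.le_iff_le (Ioc_subset_Icc_self hu) ht).1 hxu.2⟩, hfu⟩
  · rintro ⟨hu, hfu⟩
    have huτ : u ∈ Icc 0 τ := ⟨hu.1.le, hu.2.trans ht.2⟩
    exact ⟨⟨hu.1, huτ.2⟩, hfu, hmono.monotoneOn h0 huτ huτ.1, hmono.monotoneOn huτ ht hu.2⟩

end StallingMeasure

/-- Here `(f y)⁻¹ = 0` where `f y = 0`, so the integral is over `{f ≠ 0}`. -/
theorem strictly_increasing_solution_yields_measure_general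
    (f : ℝ → ℝ) (M : ℝ) (hb : ∀ y : ℝ, |f y| ≤ M)
    (τ : ℝ) (hτ : 0 ≤ τ) (x₀ : ℝ) (x : ℝ → ℝ)
    (hmono : StrictMonoOn x (Set.Icc 0 τ))
    (hsol : ∀ t ∈ Set.Icc (0:ℝ) τ, x t = x₀ + ∫ s in (0:ℝ)..t, f (x s)) :
    ∃ μ : Measure ℝ,
      (∀ y : ℝ, μ {y} = 0) ∧
      (∀ A : Set ℝ, MeasurableSet A → (∀ a ∈ A, f a ≠ 0) → μ A = 0) ∧
      (∀ t ∈ Set.Icc (0:ℝ) τ,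
        μ (Set.Icc x₀ (x t)) < ⊤ ∧
        (∫ y in x₀..(x t), (f y)⁻¹) + (μ (Set.Icc x₀ (x t))).toReal = t) := by
  have hint := intervalIntegrable_of_strictMonoOn_of_eq_add_integral hτ hmono hsol
  have hlip := lipschitzOnWith_of_eq_add_integral hint (fun s => hb (x s)) hsol
  have hx0 : x 0 = x₀ := by simpa using hsol 0 (left_mem_Icc.2 hτ)
  refine ⟨stallingMeasure f x τ,
    stallingMeasure_singleton hlip.continuousOn (hmono.injOn.mono Ioc_subset_Icc_self),
    fun A hA hfA => stallingMeasure_eq_zero_of_forall_ne_zero hlip.continuousOn hA hfA,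
    fun t ht => ?_⟩
  rw [← hx0, stallingMeasure_Icc hmono hlip.continuousOn ht]
  refine ⟨(measure_mono fun u hu => hu.1).trans_lt measure_Ioc_lt_top, ?_⟩
  have hsub : Icc 0 t ⊆ Icc 0 τ := Icc_subset_Icc_right ht.2
  have hderiv : ∀ᵐ u, u ∈ Ioo 0 t → HasDerivAt x (f (x u)) u :=
    (ae_hasDerivAt_of_eq_add_integral hint hsol).mono fun u hu hut =>
      hu (Ioo_subset_Ioo_right ht.2 hut)
  have hchange := integral_Icc_deriv_smul_of_monotoneOn_of_lipschitzOnWith ht.1 (hlip.mono hsub)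
    (hmono.monotoneOn.mono hsub) hderiv fun y => (f y)⁻¹
  rw [intervalIntegral.integral_of_le (hmono.monotoneOn (left_mem_Icc.2 hτ) ht ht.1),
    ← integral_Icc_eq_integral_Ioc, ← hchange, integral_Icc_eq_integral_Ioc,
    ← intervalIntegral.integral_of_le ht.1]
  have hint_t : IntervalIntegrable (fun s => f (x s)) volume 0 t :=
    hint.mono_set (uIcc_subset_uIcc left_mem_uIcc (Icc_subset_uIcc ht))
  exact (integral_mul_inv_self_add_volume_setOf_eq_zero ht.1
    hint_t.1.aestronglyMeasurable).trans (sub_zero t)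

/-- Lemma 3.1 (necessity): a strictly increasing Carathéodory solution of
`ẋ = f(x)`, `x(0) = x₀` determines an atomless measure `μ` supported on
`f⁻¹(0)` such that `∫_{x₀}^{x(t)} 1/f + μ([x₀, x(t)]) = t` on `[0,τ]`.
(Here `(f y)⁻¹ = 0` where `f y = 0`, so the integral is over `{f ≠ 0}`.) -/
theorem strictly_increasing_solution_yields_measure
    (f : ℝ → ℝ) (M : ℝ) (hb : ∀ y : ℝ, |f y| ≤ M)
    (fl fr : ℝ → ℝ) (hreg : Regulated f fl fr) (hnj : NoJamming f fl fr)
    (τ : ℝ) (hτ : 0 ≤ τ) (x₀ : ℝ) (x : ℝ → ℝ)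
    (hmono : StrictMonoOn x (Set.Icc 0 τ))
    (hsol : ∀ t ∈ Set.Icc (0:ℝ) τ, x t = x₀ + ∫ s in (0:ℝ)..t, f (x s)) :
    ∃ μ : Measure ℝ,
      (∀ y : ℝ, μ {y} = 0) ∧
      (∀ A : Set ℝ, MeasurableSet A → (∀ a ∈ A, f a ≠ 0) → μ A = 0) ∧
      (∀ t ∈ Set.Icc (0:ℝ) τ,
        μ (Set.Icc x₀ (x t)) < ⊤ ∧
        (∫ y in x₀..(x t), (f y)⁻¹) + (μ (Set.Icc x₀ (x t))).toReal = t) :=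
  strictly_increasing_solution_yields_measure_general f M hb τ hτ x₀ x hmono hsol
end

section
/- Let f : ℝ → ℝ be regulated, and let x be a Carathéodory solution of ẋ = f(x) on an interval. If x is differentiable at an interior point τ of its domain with ẋ(τ) > 0, then the right limit of f at x(τ) equals the derivative: f(x(τ)+) = ẋ(τ). -/
/-!
Since `ẋ(τ) > 0`, `x(s) > x(τ)` for `s` just to the right of `τ`, so `x(s) → x(τ)⁺` and hence `f(x(s)) → f(x(τ)+)` as `s → τ⁺`. The integral equation then identifies
the right derivative of `x` at `τ` with this limit (fundamental theorem of calculus at a point of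
one-sided convergence of the integrand), and it must agree with `ẋ(τ)`.
-/

open MeasureTheory Set Filter

open Topology

namespace HasDerivWithinAt

variable {x : ℝ → ℝ} {d τ : ℝ}

theorem eventually_gt_of_pos (h : HasDerivWithinAt x d (Ioi τ) τ) (hd : 0 < d) :
    ∀ᶠ t in 𝓝[>] τ, x τ < x t := by
  have hslope := (hasDerivWithinAt_iff_tendsto_slope' (lt_irrefl τ)).1 h
  filter_upwards [hslope.eventually (eventually_gt_nhds hd), self_mem_nhdsWithin] with t hpos ht
  exact (slope_pos_iff ht).1 hpos

theorem tendsto_nhdsGT_of_pos (h : HasDerivWithinAt x d (Ioi τ) τ) (hd : 0 < d) :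
    Tendsto x (𝓝[>] τ) (𝓝[>] (x τ)) :=
  tendsto_nhdsWithin_iff.2 ⟨h.continuousWithinAt, h.eventually_gt_of_pos hd⟩

end HasDerivWithinAt

section IntegralEquation

variable {x g : ℝ → ℝ} {τ : ℝ}

/-- A non-integrable integrand has integral `0`, so an `x` that moves forces integrability. -/
theorem stronglyMeasurableAtFilter_of_integral_eq
    (hx : ∀ᶠ t in 𝓝[>] τ, x t = x τ + ∫ s in τ..t, g s) (hmove : ∀ᶠ t in 𝓝[>] τ, x t ≠ x τ) :
    StronglyMeasurableAtFilter g (𝓝[>] τ) := by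
  obtain ⟨t, ⟨hxt, hne⟩, hτt⟩ := ((hx.and hmove).and self_mem_nhdsWithin).exists
  have hint : IntervalIntegrable g volume τ t := by
    by_contra hint
    rw [intervalIntegral.integral_undef hint, add_zero] at hxt
    exact hne hxt
  exact ⟨Ioo τ t, Ioo_mem_nhdsGT hτt, (hint.1.mono_set Ioo_subset_Ioc_self).aestronglyMeasurable⟩

theorem hasDerivWithinAt_Ici_of_integral_eq {L : ℝ}
    (hx : ∀ᶠ t in 𝓝[≥] τ, x t = x τ + ∫ s in τ..t, g s)
    (hmeas : StronglyMeasurableAtFilter g (𝓝[>] τ)) (hg : Tendsto g (𝓝[>] τ) (𝓝 L)) :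
    HasDerivWithinAt x L (Ici τ) τ := by
  have hF : HasDerivWithinAt (fun t => ∫ s in τ..t, g s) L (Ici τ) τ :=
    intervalIntegral.integral_hasDerivWithinAt_of_tendsto_ae_right .refl hmeas
      (hg.mono_left inf_le_left)
  exact (hF.const_add (x τ)).congr_of_eventuallyEq hx (by simp)

end IntegralEquation

/-- If a Carathéodory solution of `ẋ = f(x)` (with `f` regulated) is
differentiable at an interior time `τ` with `ẋ(τ) > 0`, then the right limit of
`f` at `x(τ)` equals the derivative: `f(x(τ)+) = ẋ(τ)`. -/
theorem right_limit_eq_deriv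
    (f fl fr : ℝ → ℝ) (hreg : Regulated f fl fr)
    (a b : ℝ) (x : ℝ → ℝ)
    (hsol : ∀ t₁ ∈ Set.Icc a b, ∀ t₂ ∈ Set.Icc a b, t₁ ≤ t₂ →
      x t₂ = x t₁ + ∫ s in t₁..t₂, f (x s))
    (τ : ℝ) (hτ : τ ∈ Set.Ioo a b)
    (d : ℝ) (hderiv : HasDerivAt x d τ) (hd : 0 < d) :
    fr (x τ) = d := by
  have hright : HasDerivWithinAt x d (Ioi τ) τ := hderiv.hasDerivWithinAt
  have hsol_right : ∀ᶠ t in 𝓝[≥] τ, x t = x τ + ∫ s in τ..t, f (x s) := by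
    filter_upwards [Ico_mem_nhdsGE hτ.2] with t ht
    exact hsol τ (Ioo_subset_Icc_self hτ) t ⟨hτ.1.le.trans ht.1, ht.2.le⟩ ht.1
  have hlim : Tendsto (fun s => f (x s)) (𝓝[>] τ) (𝓝 (fr (x τ))) :=
    (hreg (x τ)).2.comp (hright.tendsto_nhdsGT_of_pos hd)
  have hmeas : StronglyMeasurableAtFilter (fun s => f (x s)) (𝓝[>] τ) :=
    stronglyMeasurableAtFilter_of_integral_eq
      (hsol_right.filter_mono (nhdsWithin_mono τ Ioi_subset_Ici_self))
      ((hright.eventually_gt_of_pos hd).mono fun _ ht => ht.ne')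
  exact (uniqueDiffWithinAt_Ici τ).eq_deriv _
    (hasDerivWithinAt_Ici_of_integral_eq hsol_right hmeas hlim) hderiv.hasDerivWithinAt
end

section
/- There exists a continuous function f : ℝ → ℝ with 0 ≤ f(y) ≤ 1 for all y, such that the set K = {x ∈ [0,1] : f(x) = 0} is uncountable and has Lebesgue measure zero, and the Lebesgue integral ∫_{[0,1] \ K} 1/f(x) dx is finite. (For instance, one may take K to be the ternary Cantor set and, on each complementary open interval (a,b) of the Cantor set in [0,1], set f(x) = min{|x−a|^{1/3}, |x−b|^{1/3}}, with f = 0 on K ∪ (−∞,0] ∪ [1,∞); then ∫_{[0,1]\K} 1/f dx = 3^{1/3}/2^{2/3} · Σ_{n≥0} (2/3^{2/3})ⁿ < ∞.) -/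
/-!
Take `f = min 1 (dist(·, C))^{1/4}` for the Cantor set `C`. Its zero set in `[0,1]` is `C`,
which is uncountable and null because the `n`-th stage of its construction has measure
`(2/3)^n`. For the integral, split `[0,1] \ C` into the dyadic shells `2^{-(k+1)} < f ≤ 2^{-k}`:
there `1/f < 2^{k+1}`, and the shell lies within `16^{-k}` of the stage `2k`, a set of measure
at most `(4/9)^k + 2 · 4^{-k}`. The resulting series `∑ 2 (8/9)^k + 4 · 2^{-k}` converges.
-/

open MeasureTheory Set Filter

open Metric

theorem setLIntegral_ofReal_one_div_le_tsum {α : Type*} [MeasurableSpace α] (μ : Measure α)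
    {g : α → ℝ} (hg : Measurable g) {s : Set α} (hs : MeasurableSet s)
    (hg_pos : ∀ x ∈ s, 0 < g x) (hg_le : ∀ x ∈ s, g x ≤ 1) :
    ∫⁻ x in s, ENNReal.ofReal (1 / g x) ∂μ ≤
      ∑' k : ℕ, 2 ^ (k + 1) * μ ({x | g x ≤ 2⁻¹ ^ k} ∩ s) := by
  have hlevel (k : ℕ) : MeasurableSet {x | g x ≤ 2⁻¹ ^ k} :=
    measurableSet_le hg measurable_const
  -- `1 / g x < 2 ^ (m + 1)` on the dyadic shell `2⁻¹ ^ (m + 1) < g x ≤ 2⁻¹ ^ m`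
  have hpointwise : ∀ x ∈ s, ENNReal.ofReal (1 / g x) ≤
      ∑' k : ℕ, {x | g x ≤ 2⁻¹ ^ k}.indicator (fun _ => (2 : ENNReal) ^ (k + 1)) x := by
    intro x hx
    obtain ⟨m, hm_lt, hm_le⟩ :=
      exists_nat_pow_near_of_lt_one (hg_pos x hx) (hg_le x hx) (by norm_num : (0 : ℝ) < 2⁻¹)
        (by norm_num)
    calc ENNReal.ofReal (1 / g x) ≤ ENNReal.ofReal (2 ^ (m + 1)) := by
          refine ENNReal.ofReal_le_ofReal ?_
          rw [← inv_inv ((2 : ℝ) ^ (m + 1)), ← inv_pow, one_div]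
          exact inv_anti₀ (by positivity) hm_lt.le
      _ = {x | g x ≤ 2⁻¹ ^ m}.indicator (fun _ => (2 : ENNReal) ^ (m + 1)) x := by
          rw [indicator_of_mem (show x ∈ {x | g x ≤ 2⁻¹ ^ m} from hm_le)]
          simp [ENNReal.ofReal_pow]
      _ ≤ _ := ENNReal.le_tsum m
  calc ∫⁻ x in s, ENNReal.ofReal (1 / g x) ∂μ
      ≤ ∫⁻ x in s, ∑' k : ℕ,
          {x | g x ≤ 2⁻¹ ^ k}.indicator (fun _ => (2 : ENNReal) ^ (k + 1)) x ∂μ :=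
        setLIntegral_mono' hs hpointwise
    _ = ∑' k : ℕ, 2 ^ (k + 1) * μ ({x | g x ≤ 2⁻¹ ^ k} ∩ s) := by
        rw [lintegral_tsum fun k => (measurable_const.indicator (hlevel k)).aemeasurable]
        simp_rw [lintegral_indicator_const (hlevel _), Measure.restrict_apply (hlevel _)]

section RootInfDist

variable {α : Type*} [PseudoMetricSpace α]

theorem mem_cthickening_of_infDist_le {K : Set α} (hK : K.Nonempty) {x : α} {δ : ℝ}
    (h : infDist x K ≤ δ) : x ∈ cthickening δ K := by
  rw [mem_cthickening_iff,
    ENNReal.le_ofReal_iff_toReal_le (infEDist_ne_top hK) (infDist_nonneg.trans h)]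
  exact h

noncomputable def rootInfDist (K : Set α) (x : α) : ℝ := min 1 √√(infDist x K)

theorem continuous_rootInfDist (K : Set α) : Continuous (rootInfDist K) :=
  continuous_const.min
    (Real.continuous_sqrt.comp (Real.continuous_sqrt.comp (continuous_infDist_pt K)))

theorem rootInfDist_nonneg (K : Set α) (x : α) : 0 ≤ rootInfDist K x :=
  le_min zero_le_one (Real.sqrt_nonneg _)

theorem rootInfDist_le_one (K : Set α) (x : α) : rootInfDist K x ≤ 1 :=
  min_le_left _ _

theorem rootInfDist_eq_zero_iff {K : Set α} (hK : IsClosed K) (hne : K.Nonempty) {x : α} :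
    rootInfDist K x = 0 ↔ x ∈ K := by
  rw [hK.mem_iff_infDist_zero hne, rootInfDist, min_eq_iff]
  simp +contextual [Real.sqrt_eq_zero', infDist_nonneg.ge_iff_eq']

theorem infDist_le_pow_four_of_rootInfDist_le {K : Set α} {x : α} {t : ℝ}
    (hx : infDist x K ≤ 1) (h : rootInfDist K x ≤ t) : infDist x K ≤ t ^ 4 := by
  have ht : 0 ≤ t := (rootInfDist_nonneg K x).trans h
  have hroot : √√(infDist x K) ≤ t := by
    rwa [rootInfDist, min_eq_right (Real.sqrt_le_one.mpr (Real.sqrt_le_one.mpr hx))] at h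
  rw [Real.sqrt_le_left ht, Real.sqrt_le_left (by positivity)] at hroot
  linarith [pow_mul t 2 2]

end RootInfDist

theorem isCompact_preCantorSet (n : ℕ) : IsCompact (preCantorSet n) :=
  isCompact_Icc.of_isClosed_subset (isClosed_preCantorSet n) preCantorSet_subset_unitInterval

theorem cthickening_Icc_subset {a b ε : ℝ} (hε : 0 ≤ ε) :
    cthickening ε (Icc a b) ⊆ Icc (a - ε) (b + ε) := by
  rw [isCompact_Icc.cthickening_eq_biUnion_closedBall hε]
  simp only [iUnion_subset_iff, Real.closedBall_eq_Icc]
  intro y hy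
  exact Icc_subset_Icc (by linarith [hy.1]) (by linarith [hy.2])

theorem mem_cthickening_preCantorSet_succ {n : ℕ} {ε x : ℝ} (hε : 0 ≤ ε)
    (hx : x ∈ cthickening ε (preCantorSet (n + 1))) :
    3 * x ∈ cthickening (3 * ε) (preCantorSet n) ∨
      3 * x - 2 ∈ cthickening (3 * ε) (preCantorSet n) := by
  rw [(isCompact_preCantorSet _).cthickening_eq_biUnion_closedBall hε] at hx
  simp only [mem_iUnion, mem_closedBall, Real.dist_eq, exists_prop] at hx
  obtain ⟨y, hy, hxy⟩ := hx
  rw [preCantorSet_succ] at hy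
  rcases hy with ⟨z, hz, rfl⟩ | ⟨z, hz, rfl⟩
  · refine .inl (mem_cthickening_of_dist_le _ z _ _ hz ?_)
    rw [Real.dist_eq, show 3 * x - z = 3 * (x - z / 3) by ring, abs_mul, abs_of_pos three_pos]
    gcongr
  · refine .inr (mem_cthickening_of_dist_le _ z _ _ hz ?_)
    rw [Real.dist_eq, show 3 * x - 2 - z = 3 * (x - (2 + z) / 3) by ring, abs_mul,
      abs_of_pos three_pos]
    gcongr

theorem volume_preimage_three_mul_sub (c : ℝ) (t : Set ℝ) :
    volume ((fun x => 3 * x - c) ⁻¹' t) = ENNReal.ofReal 3⁻¹ * volume t := by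
  rw [show (fun x : ℝ => 3 * x - c) ⁻¹' t = (fun x => 3 * x) ⁻¹' ((· + -c) ⁻¹' t) by
      simp only [sub_eq_add_neg]; rfl,
    Real.volume_preimage_mul_left three_ne_zero, measure_preimage_add_right,
    abs_of_pos (by norm_num)]

-- The `n`-th stage is `2 ^ n` intervals of length `3 ^ (-n)`; thickening adds `2 ε` to each.
theorem volume_cthickening_preCantorSet_le (n : ℕ) {ε : ℝ} (hε : 0 ≤ ε) :
    volume (cthickening ε (preCantorSet n)) ≤
      ENNReal.ofReal ((2 / 3) ^ n + 2 ^ (n + 1) * ε) := by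
  induction n generalizing ε with
  | zero =>
    calc volume (cthickening ε (preCantorSet 0)) ≤ volume (Icc (0 - ε) (1 + ε)) :=
          measure_mono (cthickening_Icc_subset hε)
      _ = ENNReal.ofReal ((2 / 3) ^ 0 + 2 ^ (0 + 1) * ε) := by
          rw [Real.volume_Icc]; ring_nf
  | succ n ih =>
    set t := cthickening (3 * ε) (preCantorSet n)
    calc volume (cthickening ε (preCantorSet (n + 1)))
        ≤ volume ((fun x => 3 * x - 0) ⁻¹' t ∪ (fun x => 3 * x - 2) ⁻¹' t) :=
          measure_mono fun x hx => by
            simpa only [mem_union, mem_preimage, sub_zero] using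
              mem_cthickening_preCantorSet_succ hε hx
      _ ≤ ENNReal.ofReal 3⁻¹ * volume t + ENNReal.ofReal 3⁻¹ * volume t := by
          grw [measure_union_le, volume_preimage_three_mul_sub, volume_preimage_three_mul_sub]
      _ ≤ ENNReal.ofReal 3⁻¹ * ENNReal.ofReal ((2 / 3) ^ n + 2 ^ (n + 1) * (3 * ε))
          + ENNReal.ofReal 3⁻¹ * ENNReal.ofReal ((2 / 3) ^ n + 2 ^ (n + 1) * (3 * ε)) := by
          grw [ih (by positivity)]
      _ = ENNReal.ofReal ((2 / 3) ^ (n + 1) + 2 ^ (n + 1 + 1) * ε) := by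
          rw [← ENNReal.ofReal_mul (by norm_num), ← ENNReal.ofReal_add (by positivity)
            (by positivity)]
          ring_nf

theorem volume_cantorSet : volume cantorSet = 0 := by
  have hstage (n : ℕ) : volume cantorSet ≤ ENNReal.ofReal ((2 / 3) ^ n) := by
    calc volume cantorSet ≤ volume (cthickening 0 (preCantorSet n)) :=
          measure_mono ((iInter_subset _ n).trans (self_subset_cthickening _))
      _ ≤ ENNReal.ofReal ((2 / 3) ^ n) := by
          simpa using volume_cthickening_preCantorSet_le n le_rfl
  have hlim : Tendsto (fun n : ℕ => ENNReal.ofReal ((2 / 3) ^ n)) atTop (nhds 0) := by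
    simpa using ENNReal.tendsto_ofReal
      (tendsto_pow_atTop_nhds_zero_of_lt_one (by norm_num : (0 : ℝ) ≤ 2 / 3) (by norm_num))
  exact le_antisymm (ge_of_tendsto' hlim hstage) bot_le

theorem not_countable_cantorSet : ¬ cantorSet.Countable := by
  have : Uncountable (ℕ → Bool) := by
    rw [← Cardinal.aleph0_lt_mk_iff]
    simpa using Cardinal.cantor Cardinal.aleph0
  rw [← countable_coe_iff, not_countable_iff]
  exact cantorSetEquivNatToBool.symm.injective.uncountable

theorem sep_rootInfDist_cantorSet_eq_zero :
    {x ∈ Icc (0 : ℝ) 1 | rootInfDist cantorSet x = 0} = cantorSet := by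
  ext x
  rw [mem_sep_iff, rootInfDist_eq_zero_iff isClosed_cantorSet ⟨0, zero_mem_cantorSet⟩]
  exact ⟨And.right, fun hx => ⟨cantorSet_subset_unitInterval hx, hx⟩⟩

theorem rootInfDist_cantorSet_sublevel_subset_cthickening (k : ℕ) :
    {x | rootInfDist cantorSet x ≤ 2⁻¹ ^ k} ∩ Icc 0 1 ⊆
      cthickening ((2⁻¹ ^ k) ^ 4) (preCantorSet (2 * k)) := by
  rintro x ⟨hlevel, hx⟩
  have hdist : infDist x cantorSet ≤ 1 := by
    refine (infDist_le_dist_of_mem zero_mem_cantorSet).trans ?_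
    rw [Real.dist_eq, sub_zero, abs_of_nonneg hx.1]
    exact hx.2
  refine cthickening_subset_of_subset _ (iInter_subset _ _) ?_
  exact mem_cthickening_of_infDist_le ⟨0, zero_mem_cantorSet⟩
    (infDist_le_pow_four_of_rootInfDist_le hdist hlevel)

theorem two_pow_mul_volume_rootInfDist_cantorSet_le (k : ℕ) :
    2 ^ (k + 1) * volume ({x | rootInfDist cantorSet x ≤ 2⁻¹ ^ k} ∩ Icc 0 1) ≤
      ENNReal.ofReal (2 * (8 / 9) ^ k + 4 * 2⁻¹ ^ k) := by
  calc 2 ^ (k + 1) * volume ({x | rootInfDist cantorSet x ≤ 2⁻¹ ^ k} ∩ Icc 0 1)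
      ≤ ENNReal.ofReal 2 ^ (k + 1) *
          ENNReal.ofReal ((2 / 3) ^ (2 * k) + 2 ^ (2 * k + 1) * (2⁻¹ ^ k) ^ 4) := by
        rw [ENNReal.ofReal_ofNat]
        grw [rootInfDist_cantorSet_sublevel_subset_cthickening k,
          volume_cthickening_preCantorSet_le (2 * k) (by positivity)]
    _ = ENNReal.ofReal (2 * (8 / 9) ^ k + 4 * 2⁻¹ ^ k) := by
        rw [← ENNReal.ofReal_pow zero_le_two, ← ENNReal.ofReal_mul (by positivity)]
        congr 1
        have h89 : (8 / 9 : ℝ) ^ k = (2 ^ k) ^ 3 / (3 ^ k) ^ 2 := by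
          rw [← pow_mul, ← pow_mul, mul_comm k, mul_comm k, pow_mul, pow_mul, ← div_pow]
          norm_num
        rw [h89, inv_pow, pow_succ, pow_succ, mul_comm 2 k, pow_mul, pow_mul, div_pow]
        field_simp
        ring

theorem setLIntegral_one_div_rootInfDist_cantorSet_lt_top :
    ∫⁻ x in Icc 0 1 \ {x | rootInfDist cantorSet x = 0},
      ENNReal.ofReal (1 / rootInfDist cantorSet x) < ⊤ := by
  have hf := (continuous_rootInfDist cantorSet).measurable
  have hsummable : Summable fun k : ℕ => 2 * (8 / 9 : ℝ) ^ k + 4 * 2⁻¹ ^ k :=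
    ((summable_geometric_of_lt_one (by norm_num) (by norm_num)).mul_left 2).add
      ((summable_geometric_of_lt_one (by norm_num) (by norm_num)).mul_left 4)
  calc ∫⁻ x in Icc 0 1 \ {x | rootInfDist cantorSet x = 0},
        ENNReal.ofReal (1 / rootInfDist cantorSet x)
      ≤ ∑' k : ℕ, 2 ^ (k + 1) * volume ({x | rootInfDist cantorSet x ≤ 2⁻¹ ^ k} ∩
          (Icc 0 1 \ {x | rootInfDist cantorSet x = 0})) :=
        setLIntegral_ofReal_one_div_le_tsum volume hf
          (measurableSet_Icc.diff (measurableSet_eq_fun hf measurable_const))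
          (fun x hx => (rootInfDist_nonneg _ x).lt_of_ne' hx.2)
          (fun x _ => rootInfDist_le_one _ x)
    _ ≤ ∑' k : ℕ, ENNReal.ofReal (2 * (8 / 9) ^ k + 4 * 2⁻¹ ^ k) := by
        refine ENNReal.tsum_le_tsum fun k =>
          le_trans ?_ (two_pow_mul_volume_rootInfDist_cantorSet_le k)
        grw [sdiff_subset]
    _ = ENNReal.ofReal (∑' k : ℕ, (2 * (8 / 9) ^ k + 4 * 2⁻¹ ^ k)) :=
        (ENNReal.ofReal_tsum_of_nonneg (fun k => by positivity) hsummable).symm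
    _ < ⊤ := ENNReal.ofReal_lt_top

/-- There is a continuous `f : ℝ → ℝ` with `0 ≤ f ≤ 1` whose zero set inside
`[0,1]` is uncountable and Lebesgue-null, while `∫_{[0,1] \ {f = 0}} 1/f` is
finite (e.g. built from the ternary Cantor set). -/
theorem cantor_like_zero_set_with_integrable_reciprocal :
    ∃ f : ℝ → ℝ, Continuous f ∧ (∀ y : ℝ, 0 ≤ f y ∧ f y ≤ 1) ∧
      ¬ ({x ∈ Set.Icc (0:ℝ) 1 | f x = 0}).Countable ∧
      volume {x ∈ Set.Icc (0:ℝ) 1 | f x = 0} = 0 ∧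
      (∫⁻ x in Set.Icc (0:ℝ) 1 \ {x : ℝ | f x = 0},
        ENNReal.ofReal (1 / f x)) < ⊤ := by
  refine ⟨rootInfDist cantorSet, continuous_rootInfDist cantorSet,
    fun y => ⟨rootInfDist_nonneg _ y, rootInfDist_le_one _ y⟩, ?_, ?_, ?_⟩
  · rw [sep_rootInfDist_cantorSet_eq_zero]
    exact not_countable_cantorSet
  · rw [sep_rootInfDist_cantorSet_eq_zero]
    exact volume_cantorSet
  · exact setLIntegral_one_div_rootInfDist_cantorSet_lt_top
end
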